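/- arXiv:1212.0781 — 6 statements merged into one kernel-verified Lean document; each statement's English description precedes it below -/
import Mathlib

section
/- The function x ↦ (∫ₓ^∞ w(y)^{-1} dy)^{1/2} is integrable on [0,∞), and ∫₀^∞ (∫ₓ^∞ w(y)^{-1} dy)^{1/2} dx ≤ (∫₀^∞ w(y)^{-1/3} dy)^{3/2}. -/
open MeasureTheory Set Filter

/-- Hypotheses on the weight function `w`. -/
def GoodWeight (w : ℝ → ℝ) : Prop :=
  (∀ x, 0 ≤ x → 1 ≤ w x) ∧ MonotoneOn w (Set.Ici 0) ∧ ContDiffOn ℝ 1 w (Set.Ici 0) ∧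
    MeasureTheory.IntegrableOn (fun x => (w x) ^ (-(1/3) : ℝ)) (Set.Ici 0)

/-- `h` belongs to `H_w` with weak derivative `h'`. -/
def IsHw (w h h' : ℝ → ℝ) : Prop :=
  Measurable h' ∧
  MeasureTheory.IntegrableOn (fun x => (h' x) ^ 2 * w x) (Set.Ici 0) ∧
  ∀ x, 0 ≤ x → h x = h 0 + ∫ y in (0:ℝ)..x, h' y

/-- The `H_w` norm of `h` (with weak derivative `h'`). -/
noncomputable def normW (w h h' : ℝ → ℝ) : ℝ :=
  Real.sqrt ((h 0) ^ 2 + ∫ x in Set.Ici (0:ℝ), (h' x) ^ 2 * w x)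

/-- integrability of the tail function `x ↦ (∫ₓ^∞ w⁻¹)^{1/2}`. -/
theorem stmt6 (w : ℝ → ℝ) (hw : GoodWeight w) :
    MeasureTheory.IntegrableOn
      (fun x => Real.sqrt (∫ y in Set.Ici x, (w y)⁻¹)) (Set.Ici 0) ∧
    (∫ x in Set.Ici (0:ℝ), Real.sqrt (∫ y in Set.Ici x, (w y)⁻¹)) ≤
      (∫ y in Set.Ici (0:ℝ), (w y) ^ (-(1/3) : ℝ)) ^ ((3:ℝ)/2) := by
  obtain ⟨h1, hmono, hcont, hint⟩ := hw
  set A : ℝ := ∫ y in Set.Ici (0:ℝ), (w y) ^ (-(1/3) : ℝ) with hA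
  have hwpos : ∀ x, (0:ℝ) ≤ x → 0 < w x := fun x hx => lt_of_lt_of_le one_pos (h1 x hx)
  have hA0 : 0 ≤ A :=
    setIntegral_nonneg measurableSet_Ici fun y hy => Real.rpow_nonneg (hwpos y hy).le _
  -- measurability of w on Ici x
  have haem : ∀ x : ℝ, 0 ≤ x → AEMeasurable w (volume.restrict (Set.Ici x)) := by
    intro x hx
    exact ((hcont.continuousOn).mono (Set.Ici_subset_Ici.2 hx)).aemeasurable measurableSet_Ici
  -- integrability of w^(-1/3) on Ici x
  have hint13 : ∀ x : ℝ, 0 ≤ x →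
      IntegrableOn (fun y => (w y) ^ (-(1/3) : ℝ)) (Set.Ici x) := fun x hx =>
    hint.mono_set (Set.Ici_subset_Ici.2 hx)
  -- integrability of w⁻¹ on Ici x
  have hintinv : ∀ x : ℝ, 0 ≤ x → IntegrableOn (fun y => (w y)⁻¹) (Set.Ici x) := by
    intro x hx
    refine MeasureTheory.Integrable.mono (hint13 x hx) ((haem x hx).inv.aestronglyMeasurable) ?_
    filter_upwards [ae_restrict_mem measurableSet_Ici] with y hy
    have h1y : 1 ≤ w y := h1 y (le_trans hx hy)
    rw [Real.norm_eq_abs, Real.norm_eq_abs, abs_of_nonneg (inv_nonneg.2 (by linarith)),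
      abs_of_nonneg (Real.rpow_nonneg (by linarith) _), ← Real.rpow_neg_one (w y)]
    exact Real.rpow_le_rpow_of_exponent_le h1y (by norm_num)
  -- the tail function
  set F : ℝ → ℝ := fun x => ∫ y in Set.Ici x, (w y)⁻¹ with hF
  have hFnonneg : ∀ x, 0 ≤ x → 0 ≤ F x := fun x hx =>
    setIntegral_nonneg measurableSet_Ici fun y hy => inv_nonneg.2 (hwpos y (le_trans hx hy)).le
  have hFanti : AntitoneOn F (Set.Ici 0) := by
    intro a ha b hb hab
    refine setIntegral_mono_set (hintinv a ha) ?_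
      (HasSubset.Subset.eventuallyLE (Set.Ici_subset_Ici.2 hab))
    filter_upwards [ae_restrict_mem measurableSet_Ici] with y hy
    exact inv_nonneg.2 (hwpos y (le_trans ha hy)).le
  -- key pointwise bound : F x ≤ (w x)^(-2/3) * A
  have hkey : ∀ x : ℝ, 0 ≤ x → F x ≤ (w x) ^ (-(2/3) : ℝ) * A := by
    intro x hx
    have hwx : 0 < w x := hwpos x hx
    have step1 : F x ≤ ∫ y in Set.Ici x, (w x) ^ (-(2/3) : ℝ) * (w y) ^ (-(1/3) : ℝ) := by
      refine setIntegral_mono_on (hintinv x hx) ((hint13 x hx).const_mul _)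
        measurableSet_Ici ?_
      intro y hy
      have hxy : x ≤ y := hy
      have hwy : 0 < w y := hwpos y (le_trans hx hxy)
      have hwxy : w x ≤ w y := hmono (le_trans hx (le_refl x) : x ∈ Set.Ici (0:ℝ))
        (le_trans hx hxy : y ∈ Set.Ici (0:ℝ)) hxy
      have e1 : (w y)⁻¹ = (w y) ^ (-(2/3) : ℝ) * (w y) ^ (-(1/3) : ℝ) := by
        rw [← Real.rpow_add hwy]
        norm_num [Real.rpow_neg_one]
      rw [e1]
      exact mul_le_mul_of_nonneg_right
        (Real.rpow_le_rpow_of_nonpos hwx hwxy (by norm_num))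
        (Real.rpow_nonneg hwy.le _)
    have step2 : (∫ y in Set.Ici x, (w x) ^ (-(2/3) : ℝ) * (w y) ^ (-(1/3) : ℝ))
        = (w x) ^ (-(2/3) : ℝ) * ∫ y in Set.Ici x, (w y) ^ (-(1/3) : ℝ) := by
      exact integral_const_mul _ _
    have step3 : (∫ y in Set.Ici x, (w y) ^ (-(1/3) : ℝ)) ≤ A := by
      refine setIntegral_mono_set hint ?_
        (HasSubset.Subset.eventuallyLE (Set.Ici_subset_Ici.2 hx))
      filter_upwards [ae_restrict_mem measurableSet_Ici] with y hy
      exact Real.rpow_nonneg (hwpos y hy).le _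
    calc F x ≤ _ := step1
      _ = _ := step2
      _ ≤ (w x) ^ (-(2/3) : ℝ) * A :=
        mul_le_mul_of_nonneg_left step3 (Real.rpow_nonneg hwx.le _)
  -- sqrt bound : sqrt (F x) ≤ w x ^ (-1/3) * sqrt A
  have hsqrt : ∀ x : ℝ, 0 ≤ x →
      Real.sqrt (F x) ≤ (w x) ^ (-(1/3) : ℝ) * Real.sqrt A := by
    intro x hx
    have hwx : 0 < w x := hwpos x hx
    have e2 : (w x) ^ (-(2/3) : ℝ) = ((w x) ^ (-(1/3) : ℝ)) ^ 2 := by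
      rw [← Real.rpow_natCast ((w x) ^ (-(1/3) : ℝ)) 2, ← Real.rpow_mul hwx.le]
      norm_num
    calc Real.sqrt (F x) ≤ Real.sqrt ((w x) ^ (-(2/3) : ℝ) * A) :=
          Real.sqrt_le_sqrt (hkey x hx)
      _ = (w x) ^ (-(1/3) : ℝ) * Real.sqrt A := by
          rw [e2, Real.sqrt_mul (sq_nonneg _), Real.sqrt_sq (Real.rpow_nonneg hwx.le _)]
  -- integrability of sqrt ∘ F on Ici 0
  have hsqrtanti : AntitoneOn (fun x => Real.sqrt (F x)) (Set.Ici 0) := fun a ha b hb hab =>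
    Real.sqrt_le_sqrt (hFanti ha hb hab)
  have haesm : AEStronglyMeasurable (fun x => Real.sqrt (F x)) (volume.restrict (Set.Ici 0)) :=
    (aemeasurable_restrict_of_antitoneOn measurableSet_Ici hsqrtanti).aestronglyMeasurable
  have hgint : IntegrableOn (fun x => (w x) ^ (-(1/3) : ℝ) * Real.sqrt A) (Set.Ici 0) :=
    hint.mul_const _
  have hfint : IntegrableOn (fun x => Real.sqrt (F x)) (Set.Ici 0) := by
    refine Integrable.mono' hgint haesm ?_
    filter_upwards [ae_restrict_mem measurableSet_Ici] with x hx
    rw [Real.norm_eq_abs, abs_of_nonneg (Real.sqrt_nonneg _)]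
    exact hsqrt x hx
  refine ⟨hfint, ?_⟩
  have hle : (∫ x in Set.Ici (0:ℝ), Real.sqrt (F x))
      ≤ ∫ x in Set.Ici (0:ℝ), (w x) ^ (-(1/3) : ℝ) * Real.sqrt A :=
    setIntegral_mono_on hfint hgint measurableSet_Ici fun x hx => hsqrt x hx
  have heq : (∫ x in Set.Ici (0:ℝ), (w x) ^ (-(1/3) : ℝ) * Real.sqrt A)
      = A * Real.sqrt A := by
    rw [integral_mul_const, mul_comm]
  have hpow : A ^ ((3:ℝ)/2) = A * Real.sqrt A := by
    rw [show ((3:ℝ)/2) = ((3:ℕ):ℝ) * (1/2 : ℝ) by norm_num, Real.rpow_mul hA0,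
      Real.rpow_natCast, ← Real.sqrt_eq_rpow, show A ^ 3 = A ^ 2 * A by ring,
      Real.sqrt_mul (sq_nonneg _), Real.sqrt_sq hA0]
  rw [hpow]
  calc _ ≤ _ := hle
    _ = A * Real.sqrt A := heq
end

section
/- There exists a constant C' > 0, depending only on w, such that every h ∈ H_w with lim_{x→∞} h(x) = 0 is integrable on [0,∞) and satisfies ∫₀^∞ |h(x)| dx ≤ C'‖h‖_w. -/
open MeasureTheory Set Filter

lemma rpow_two_eq_sq (t : ℝ) : t ^ (2:ℝ) = t ^ 2 := by
  rw [show (2:ℝ) = ((2:ℕ):ℝ) by norm_num, Real.rpow_natCast]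

set_option maxHeartbeats 1000000 in
/-- elements of `H_w⁰` are integrable, with `∫₀^∞ |h| ≤ C'‖h‖_w`. -/
theorem stmt7 (w : ℝ → ℝ) (hw : GoodWeight w) :
    ∃ C' > (0:ℝ), ∀ h h' : ℝ → ℝ, IsHw w h h' →
      Filter.Tendsto h Filter.atTop (nhds 0) →
      MeasureTheory.IntegrableOn h (Set.Ici 0) ∧
      (∫ x in Set.Ici (0:ℝ), |h x|) ≤ C' * normW w h h' := by
  obtain ⟨hw1, hwmono, hwcd, hwint⟩ := hw
  have hwcont : ContinuousOn w (Set.Ici 0) := hwcd.continuousOn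
  set C₁ : ℝ := ∫ x in Set.Ici (0:ℝ), (w x) ^ (-(1/3):ℝ) with hC₁def
  have hC₁0 : 0 ≤ C₁ :=
    setIntegral_nonneg measurableSet_Ici fun x hx =>
      Real.rpow_nonneg (le_trans zero_le_one (hw1 x hx)) _
  refine ⟨C₁ * Real.sqrt C₁ + 1, by positivity, ?_⟩
  rintro h h' ⟨hm, hint, hrep⟩ htend
  set I : ℝ := ∫ x in Set.Ici (0:ℝ), (h' x) ^ 2 * w x with hIdef
  have hI0 : 0 ≤ I := setIntegral_nonneg measurableSet_Ici fun x hx =>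
    mul_nonneg (sq_nonneg _) (le_trans zero_le_one (hw1 x hx))
  -- pointwise facts about w
  have hwpos : ∀ x : ℝ, 0 ≤ x → 0 < w x := fun x hx =>
    lt_of_lt_of_le zero_lt_one (hw1 x hx)
  have hinv_le : ∀ x : ℝ, 0 ≤ x → (w x)⁻¹ ≤ (w x) ^ (-(1/3):ℝ) := by
    intro x hx
    rw [← Real.rpow_neg_one]
    exact Real.rpow_le_rpow_of_exponent_le (hw1 x hx) (by norm_num)
  -- h' is integrable on [0,∞)
  have habs : IntegrableOn h' (Set.Ici 0) := by
    have hsum : IntegrableOn (fun x => (h' x)^2 * w x + (w x)^(-(1/3):ℝ)) (Set.Ici 0) :=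
      hint.add hwint
    refine Integrable.mono'
      (g := fun x => ((h' x)^2 * w x + (w x)^(-(1/3):ℝ))/2)
      (hsum.div_const 2) hm.aestronglyMeasurable ?_
    rw [ae_restrict_iff' measurableSet_Ici]
    refine Eventually.of_forall fun x hx => ?_
    have h1 : (1:ℝ) ≤ w x := hw1 x hx
    have h2 := hinv_le x hx
    have hwp := hwpos x hx
    have h3 : |h' x| ≤ ((h' x)^2 * w x + (w x)⁻¹)/2 := by
      rw [le_div_iff₀ (by norm_num : (0:ℝ) < 2)]
      have key : 2 * |h' x| * (w x) ≤ |h' x| ^ 2 * (w x) * (w x) + 1 := by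
        nlinarith [sq_nonneg (|h' x| * w x - 1)]
      have h5 : (w x) * (w x)⁻¹ = 1 := mul_inv_cancel₀ (ne_of_gt hwp)
      have key2 : 2 * |h' x| ≤ |h' x| ^ 2 * (w x) + (w x)⁻¹ := by
        have h4 := mul_le_mul_of_nonneg_right key (inv_nonneg.2 (le_of_lt hwp))
        calc 2 * |h' x| = 2 * |h' x| * ((w x) * (w x)⁻¹) := by rw [h5]; ring
          _ = 2 * |h' x| * (w x) * (w x)⁻¹ := by ring
          _ ≤ (|h' x| ^ 2 * (w x) * (w x) + 1) * (w x)⁻¹ := h4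
          _ = |h' x| ^ 2 * (w x) * ((w x) * (w x)⁻¹) + (w x)⁻¹ := by ring
          _ = |h' x| ^ 2 * (w x) + (w x)⁻¹ := by rw [h5]; ring
      rw [sq_abs] at key2
      linarith
    calc ‖h' x‖ = |h' x| := rfl
      _ ≤ ((h' x)^2 * w x + (w x)⁻¹)/2 := h3
      _ ≤ ((h' x)^2 * w x + (w x)^(-(1/3):ℝ))/2 := by linarith
  have habsIoi : IntegrableOn h' (Set.Ioi 0) := habs.mono_set Ioi_subset_Ici_self
  -- the limit at infinity identifies h 0
  have h0eq : h 0 + ∫ t in Set.Ioi (0:ℝ), h' t = 0 := by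
    have hlim : Tendsto (fun b => h 0 + ∫ y in (0:ℝ)..b, h' y) atTop
        (nhds (h 0 + ∫ t in Set.Ioi (0:ℝ), h' t)) :=
      ((intervalIntegral_tendsto_integral_Ioi 0 habsIoi tendsto_id).const_add _)
    have heq : (fun b => h 0 + ∫ y in (0:ℝ)..b, h' y) =ᶠ[atTop] h := by
      filter_upwards [eventually_ge_atTop (0:ℝ)] with b hb using (hrep b hb).symm
    exact tendsto_nhds_unique (hlim.congr' heq) htend
  -- representation h x = -∫_{Ioi x} h'
  have hval : ∀ x : ℝ, 0 ≤ x → h x = - ∫ t in Set.Ioi x, h' t := by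
    intro x hx
    have hsplit : (∫ t in Set.Ioi (0:ℝ), h' t)
        = (∫ t in Set.Ioc 0 x, h' t) + ∫ t in Set.Ioi x, h' t := by
      rw [← setIntegral_union (Ioc_disjoint_Ioi le_rfl) measurableSet_Ioi
        (habsIoi.mono_set Ioc_subset_Ioi_self) (habs.mono_set (Ioi_subset_Ici hx)),
        Ioc_union_Ioi_eq_Ioi hx]
    have hhx := hrep x hx
    rw [intervalIntegral.integral_of_le hx] at hhx
    have : ∫ y in Set.Ioc 0 x, h' y = (∫ t in Set.Ioi (0:ℝ), h' t) - ∫ t in Set.Ioi x, h' t := by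
      linarith
    rw [hhx, this]
    linarith
  -- key pointwise bound via Cauchy-Schwarz
  have key : ∀ x : ℝ, 0 ≤ x →
      |h x| ≤ Real.sqrt I * (Real.sqrt C₁ * (w x) ^ (-(1/3):ℝ)) := by
    intro x hx
    have hIoisub : Set.Ioi x ⊆ Set.Ici (0:ℝ) := fun y hy =>
      le_of_lt (lt_of_le_of_lt hx hy)
    set μx := volume.restrict (Set.Ioi x) with hμx
    have hw_meas : AEMeasurable w μx :=
      (hwcont.mono hIoisub).aemeasurable measurableSet_Ioi
    have hsqrtw_meas : AEMeasurable (fun y => Real.sqrt (w y)) μx :=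
      Real.continuous_sqrt.measurable.comp_aemeasurable hw_meas
    set f : ℝ → ℝ := fun y => h' y * Real.sqrt (w y) with hfdef
    set g : ℝ → ℝ := fun y => (Real.sqrt (w y))⁻¹ with hgdef
    have hf_meas : AEStronglyMeasurable f μx :=
      (hm.aemeasurable.mul hsqrtw_meas).aestronglyMeasurable
    have hg_meas : AEStronglyMeasurable g μx :=
      hsqrtw_meas.inv.aestronglyMeasurable
    have hae : ∀ᵐ y ∂μx, y ∈ Set.Ioi x := ae_restrict_mem measurableSet_Ioi
    -- f², g²
    have hf2 : Integrable (fun y => f y ^ 2) μx := by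
      refine (Integrable.congr (hint.mono_set hIoisub) ?_)
      filter_upwards [hae] with y hy
      have : (0:ℝ) ≤ w y := le_of_lt (hwpos y (hIoisub hy))
      simp [hfdef, mul_pow, Real.sq_sqrt this]
    have hwinvint : Integrable (fun y => (w y)⁻¹) μx := by
      refine Integrable.mono' (hwint.mono_set hIoisub)
        ((hwcont.mono hIoisub).aemeasurable measurableSet_Ioi).inv.aestronglyMeasurable ?_
      filter_upwards [hae] with y hy
      have hy0 : (0:ℝ) ≤ y := hIoisub hy
      rw [Real.norm_eq_abs, abs_of_nonneg (le_of_lt (inv_pos.2 (hwpos y hy0)))]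
      exact hinv_le y hy0
    have hg2 : Integrable (fun y => g y ^ 2) μx := by
      refine Integrable.congr hwinvint ?_
      filter_upwards [hae] with y hy
      have h0w : (0:ℝ) ≤ w y := le_of_lt (hwpos y (hIoisub hy))
      simp only [hgdef]
      rw [inv_pow, Real.sq_sqrt h0w]
    have hfmem : MemLp f (ENNReal.ofReal 2) μx := by
      rw [show ENNReal.ofReal 2 = 2 by norm_num]
      exact (memLp_two_iff_integrable_sq hf_meas).2 hf2
    have hgmem : MemLp g (ENNReal.ofReal 2) μx := by
      rw [show ENNReal.ofReal 2 = 2 by norm_num]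
      exact (memLp_two_iff_integrable_sq hg_meas).2 hg2
    have hCS := MeasureTheory.integral_mul_norm_le_Lp_mul_Lq
      (⟨by norm_num, by norm_num, by norm_num⟩ : Real.HolderConjugate 2 2) hfmem hgmem
    -- |h x| ≤ ∫ ‖f‖ * ‖g‖
    have step1 : |h x| ≤ ∫ y, ‖f y‖ * ‖g y‖ ∂μx := by
      rw [hval x hx, abs_neg]
      calc |∫ t in Set.Ioi x, h' t| = ‖∫ t in Set.Ioi x, h' t‖ :=
            (Real.norm_eq_abs _).symm
        _ ≤ ∫ t in Set.Ioi x, ‖h' t‖ := norm_integral_le_integral_norm _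
        _ = ∫ y, ‖f y‖ * ‖g y‖ ∂μx := by
            refine integral_congr_ae ?_
            filter_upwards [hae] with y hy
            have h0y : (0:ℝ) ≤ y := hIoisub hy
            have hsp : 0 < Real.sqrt (w y) := Real.sqrt_pos.2 (hwpos y h0y)
            simp only [hfdef, hgdef]
            rw [Real.norm_eq_abs, Real.norm_eq_abs, Real.norm_eq_abs, abs_mul,
              abs_of_pos hsp, abs_of_pos (inv_pos.2 hsp), mul_assoc,
              mul_inv_cancel₀ (ne_of_gt hsp), mul_one]
    -- bound the f factor
    have hfint_le : ∫ y, ‖f y‖ ^ (2:ℝ) ∂μx ≤ I := by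
      have : ∫ y, ‖f y‖ ^ (2:ℝ) ∂μx = ∫ y, (h' y)^2 * w y ∂μx := by
        refine integral_congr_ae ?_
        filter_upwards [hae] with y hy
        have h0w : (0:ℝ) ≤ w y := le_of_lt (hwpos y (hIoisub hy))
        simp only [hfdef]
        rw [rpow_two_eq_sq, Real.norm_eq_abs, sq_abs, mul_pow, Real.sq_sqrt h0w]
      rw [this]
      exact setIntegral_mono_set hint
        ((ae_restrict_iff' measurableSet_Ici).2 (Eventually.of_forall fun y hy =>
          mul_nonneg (sq_nonneg _) (le_of_lt (hwpos y hy))))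
        (HasSubset.Subset.eventuallyLE hIoisub)
    -- bound the g factor
    have hgint_le : ∫ y, ‖g y‖ ^ (2:ℝ) ∂μx ≤ (w x) ^ (-(2/3):ℝ) * C₁ := by
      have heqg : ∫ y, ‖g y‖ ^ (2:ℝ) ∂μx = ∫ y, (w y)⁻¹ ∂μx := by
        refine integral_congr_ae ?_
        filter_upwards [hae] with y hy
        have h0w : (0:ℝ) ≤ w y := le_of_lt (hwpos y (hIoisub hy))
        simp only [hgdef]
        rw [rpow_two_eq_sq, Real.norm_eq_abs, sq_abs, inv_pow, Real.sq_sqrt h0w]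
      rw [heqg]
      have hstep : ∫ y, (w y)⁻¹ ∂μx
          ≤ ∫ y, (w x) ^ (-(2/3):ℝ) * (w y) ^ (-(1/3):ℝ) ∂μx := by
        refine integral_mono_ae hwinvint ((hwint.mono_set hIoisub).const_mul _) ?_
        filter_upwards [hae] with y hy
        have h0y : (0:ℝ) ≤ y := hIoisub hy
        have hwyp := hwpos y h0y
        have hwxy : w x ≤ w y := hwmono hx h0y (le_of_lt hy)
        have e1 : (w y)⁻¹ = (w y) ^ (-(2/3):ℝ) * (w y) ^ (-(1/3):ℝ) := by
          rw [← Real.rpow_add hwyp, ← Real.rpow_neg_one]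
          norm_num
        rw [e1]
        exact mul_le_mul_of_nonneg_right
          (Real.rpow_le_rpow_of_nonpos (hwpos x hx) hwxy (by norm_num))
          (Real.rpow_nonneg (le_of_lt hwyp) _)
      refine le_trans hstep ?_
      rw [integral_const_mul]
      refine mul_le_mul_of_nonneg_left ?_ (Real.rpow_nonneg (le_of_lt (hwpos x hx)) _)
      exact setIntegral_mono_set hwint
        ((ae_restrict_iff' measurableSet_Ici).2 (Eventually.of_forall fun y hy =>
          Real.rpow_nonneg (le_of_lt (hwpos y hy)) _))
        (HasSubset.Subset.eventuallyLE hIoisub)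
    -- combine
    have hfI : (∫ y, ‖f y‖ ^ (2:ℝ) ∂μx) ^ ((1:ℝ)/2) ≤ Real.sqrt I := by
      rw [Real.sqrt_eq_rpow]
      refine Real.rpow_le_rpow ?_ hfint_le (by norm_num)
      exact integral_nonneg fun y => Real.rpow_nonneg (norm_nonneg _) _
    have hgC : (∫ y, ‖g y‖ ^ (2:ℝ) ∂μx) ^ ((1:ℝ)/2)
        ≤ Real.sqrt C₁ * (w x) ^ (-(1/3):ℝ) := by
      have h1 : (∫ y, ‖g y‖ ^ (2:ℝ) ∂μx) ^ ((1:ℝ)/2)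
          ≤ ((w x) ^ (-(2/3):ℝ) * C₁) ^ ((1:ℝ)/2) := by
        refine Real.rpow_le_rpow ?_ hgint_le (by norm_num)
        exact integral_nonneg fun y => Real.rpow_nonneg (norm_nonneg _) _
      refine le_trans h1 (le_of_eq ?_)
      rw [Real.mul_rpow (Real.rpow_nonneg (le_of_lt (hwpos x hx)) _) hC₁0,
        ← Real.rpow_mul (le_of_lt (hwpos x hx)), ← Real.sqrt_eq_rpow,
        show (-(2/3:ℝ)) * (1/2) = -(1/3) by norm_num, mul_comm]
    have := le_trans step1 hCS
    calc |h x| ≤ (∫ y, ‖f y‖ ^ (2:ℝ) ∂μx) ^ ((1:ℝ)/2)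
          * (∫ y, ‖g y‖ ^ (2:ℝ) ∂μx) ^ ((1:ℝ)/2) := this
      _ ≤ Real.sqrt I * (Real.sqrt C₁ * (w x) ^ (-(1/3):ℝ)) := by
          refine mul_le_mul hfI hgC ?_ (Real.sqrt_nonneg _)
          exact Real.rpow_nonneg (integral_nonneg fun y =>
            Real.rpow_nonneg (norm_nonneg _) _) _
  -- measurability of h on [0,∞) via the primitive
  have hind : Integrable ((Set.Ici (0:ℝ)).indicator h') volume :=
    (integrable_indicator_iff measurableSet_Ici).2 habs
  have hcont : Continuous fun b => h 0 + ∫ t in (0:ℝ)..b, (Set.Ici (0:ℝ)).indicator h' t :=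
    continuous_const.add (intervalIntegral.continuous_primitive
      (fun _ _ => hind.intervalIntegrable) 0)
  have heqon : ∀ x ∈ Set.Ici (0:ℝ),
      h x = h 0 + ∫ t in (0:ℝ)..x, (Set.Ici (0:ℝ)).indicator h' t := by
    intro x hx
    rw [hrep x hx]
    congr 1
    refine (intervalIntegral.integral_congr fun y hy => ?_).symm
    rw [Set.uIcc_of_le hx] at hy
    exact Set.indicator_of_mem (Set.mem_Ici.2 hy.1) h'
  have hmeas_h : AEStronglyMeasurable h (volume.restrict (Set.Ici 0)) := by
    refine hcont.aestronglyMeasurable.congr ?_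
    rw [EventuallyEq, ae_restrict_iff' measurableSet_Ici]
    exact Eventually.of_forall fun x hx => (heqon x hx).symm
  -- integrability of h
  have hIntegrable : IntegrableOn h (Set.Ici 0) := by
    refine Integrable.mono' (hwint.const_mul (Real.sqrt I * Real.sqrt C₁)) hmeas_h ?_
    rw [ae_restrict_iff' measurableSet_Ici]
    refine Eventually.of_forall fun x hx => ?_
    rw [Real.norm_eq_abs]
    calc |h x| ≤ Real.sqrt I * (Real.sqrt C₁ * (w x) ^ (-(1/3):ℝ)) := key x hx
      _ = Real.sqrt I * Real.sqrt C₁ * (w x) ^ (-(1/3):ℝ) := (mul_assoc _ _ _).symm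
  refine ⟨hIntegrable, ?_⟩
  have h1 : (∫ x in Set.Ici (0:ℝ), |h x|)
      ≤ ∫ x in Set.Ici (0:ℝ), Real.sqrt I * Real.sqrt C₁ * (w x) ^ (-(1/3):ℝ) := by
    refine setIntegral_mono_on hIntegrable.abs (hwint.const_mul _) measurableSet_Ici ?_
    intro x hx
    calc |h x| ≤ Real.sqrt I * (Real.sqrt C₁ * (w x) ^ (-(1/3):ℝ)) := key x hx
      _ = Real.sqrt I * Real.sqrt C₁ * (w x) ^ (-(1/3):ℝ) := (mul_assoc _ _ _).symm
  have h2 : (∫ x in Set.Ici (0:ℝ), Real.sqrt I * Real.sqrt C₁ * (w x) ^ (-(1/3):ℝ))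
      = Real.sqrt I * Real.sqrt C₁ * C₁ := integral_const_mul _ _
  have hnorm : Real.sqrt I ≤ normW w h h' := by
    have hle : I ≤ (h 0)^2 + I := by nlinarith [sq_nonneg (h 0)]
    calc Real.sqrt I ≤ Real.sqrt ((h 0)^2 + I) := Real.sqrt_le_sqrt hle
      _ = normW w h h' := rfl
  have hn0 : (0:ℝ) ≤ normW w h h' := Real.sqrt_nonneg _
  calc (∫ x in Set.Ici (0:ℝ), |h x|) ≤ Real.sqrt I * Real.sqrt C₁ * C₁ := by
        rw [← h2]; exact h1
    _ = (C₁ * Real.sqrt C₁) * Real.sqrt I := by ring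
    _ ≤ (C₁ * Real.sqrt C₁) * normW w h h' :=
        mul_le_mul_of_nonneg_left hnorm (by positivity)
    _ ≤ (C₁ * Real.sqrt C₁ + 1) * normW w h h' := by nlinarith
end

section
/- For every h ∈ H_w, the function F(h) belongs to H_w if and only if lim_{x→∞} h(x) = 0. -/
open MeasureTheory Set Filter

/-- The HJM drift-type nonlinearity `F(h)(x) = h(x)·∫₀ˣ h(y) dy`. -/
noncomputable def Fop (h : ℝ → ℝ) : ℝ → ℝ := fun x => h x * ∫ y in (0:ℝ)..x, h y

lemma abs_le_sq_aux {a s : ℝ} (hs : 0 < s) : |a| ≤ (a ^ 2 * s + s⁻¹) / 2 := by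
  have h1 : 0 ≤ (|a| * s - 1) ^ 2 := sq_nonneg _
  have h2 : s * s⁻¹ = 1 := mul_inv_cancel₀ hs.ne'
  have h3 : 0 < s⁻¹ := inv_pos.2 hs
  have key : 2 * |a| * s ≤ (a ^ 2 * s + s⁻¹) * s := by nlinarith [sq_abs a, h1, h2, mul_pos hs hs]
  have := le_of_mul_le_mul_right (by linarith [key] : (2 * |a|) * s ≤ ((a ^ 2 * s + s⁻¹)) * s) hs
  linarith

noncomputable def ext0 (f : ℝ → ℝ) : ℝ → ℝ := fun y => if 0 ≤ y then f y else 0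

noncomputable def prim (c : ℝ) (f : ℝ → ℝ) : ℝ → ℝ := fun x => c + ∫ y in (0:ℝ)..x, f y

section helpers
variable {w h h' : ℝ → ℝ}

lemma GoodWeight.pos (hw : GoodWeight w) {x : ℝ} (hx : 0 ≤ x) : 0 < w x :=
  lt_of_lt_of_le one_pos (hw.1 x hx)

lemma GoodWeight.contOn (hw : GoodWeight w) : ContinuousOn w (Ici 0) :=
  hw.2.2.1.continuousOn

lemma GoodWeight.aesm (hw : GoodWeight w) :
    AEStronglyMeasurable w (volume.restrict (Ici 0)) :=
  (hw.contOn.aemeasurable measurableSet_Ici).aestronglyMeasurable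

lemma GoodWeight.inv_integrable (hw : GoodWeight w) :
    IntegrableOn (fun x => (w x)⁻¹) (Ici 0) := by
  refine Integrable.mono' hw.2.2.2 hw.aesm.aemeasurable.inv.aestronglyMeasurable ?_
  rw [ae_restrict_iff' measurableSet_Ici]
  filter_upwards with x hx
  have h1 : 1 ≤ w x := hw.1 x hx
  have : (w x)⁻¹ = w x ^ (-1 : ℝ) := (Real.rpow_neg_one _).symm
  rw [Real.norm_eq_abs, abs_of_nonneg (inv_nonneg.2 (by linarith)), this]
  exact Real.rpow_le_rpow_of_exponent_le h1 (by norm_num)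

lemma IsHw.deriv_integrable (hw : GoodWeight w) (hh : IsHw w h h') :
    IntegrableOn h' (Ici 0) := by
  refine Integrable.mono' (((hh.2.1.add hw.inv_integrable)).div_const 2)
    (hh.1.aestronglyMeasurable) ?_
  rw [ae_restrict_iff' measurableSet_Ici]
  filter_upwards with x hx
  have := abs_le_sq_aux (a := h' x) (hw.pos hx)
  simpa [Real.norm_eq_abs] using this

lemma IsHw.ext0_measurable (hh : IsHw w h h') : Measurable (ext0 h') :=
  Measurable.ite measurableSet_Ici hh.1 measurable_const

lemma IsHw.ext0_integrable (hw : GoodWeight w) (hh : IsHw w h h') :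
    Integrable (ext0 h') := by
  have h1 : IntegrableOn (ext0 h') (Ici 0) := by
    refine (hh.deriv_integrable hw).congr_fun (fun x hx => ?_) measurableSet_Ici
    exact (if_pos hx).symm
  have h2 : IntegrableOn (ext0 h') (Iic 0) := by
    have heq : ext0 h' =ᵐ[volume.restrict (Iic 0)] (fun _ => (0:ℝ)) := by
      rw [EventuallyEq, ae_restrict_iff' measurableSet_Iic]
      have hne : ∀ᵐ x : ℝ, x ≠ 0 := by
        rw [ae_iff]; simp [Set.setOf_eq_eq_singleton]
      filter_upwards [hne] with x hx0 hxle
      have : ¬ (0 ≤ x) := by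
        intro hge; exact hx0 (le_antisymm hxle hge)
      simp [ext0, this]
    exact (integrable_zero _ _ _).congr heq.symm
  have := h2.union h1
  rwa [Iic_union_Ici, integrableOn_univ] at this

lemma prim_continuous {c : ℝ} {f : ℝ → ℝ} (hf : Integrable f) : Continuous (prim c f) :=
  continuous_const.add (hf.continuous_primitive 0)

lemma IsHw.eq_prim (hh : IsHw w h h') : EqOn h (prim (h 0) (ext0 h')) (Ici 0) := by
  intro x hx
  rw [prim, hh.2.2 x hx]
  congr 1
  refine intervalIntegral.integral_congr (fun y hy => ?_)
  rw [uIcc_of_le hx] at hy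
  simp [ext0, hy.1]

lemma IsHw.contOn (hw : GoodWeight w) (hh : IsHw w h h') : ContinuousOn h (Ici 0) :=
  ((prim_continuous (hh.ext0_integrable hw)).continuousOn).congr hh.eq_prim

lemma IsHw.tendsto_limit (hw : GoodWeight w) (hh : IsHw w h h') :
    Tendsto h atTop (nhds (h 0 + ∫ t in Ioi 0, h' t)) := by
  have hint : IntegrableOn h' (Ioi 0) :=
    (hh.deriv_integrable hw).mono_set Ioi_subset_Ici_self
  have h1 : Tendsto (fun x => h 0 + ∫ t in (0:ℝ)..x, h' t) atTop
      (nhds (h 0 + ∫ t in Ioi 0, h' t)) :=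
    tendsto_const_nhds.add (intervalIntegral_tendsto_integral_Ioi 0 hint tendsto_id)
  refine h1.congr' ?_
  filter_upwards [eventually_ge_atTop (0:ℝ)] with x hx
  exact (hh.2.2 x hx).symm

noncomputable def Kc (w h' : ℝ → ℝ) : ℝ :=
  ((∫ t in Ici (0:ℝ), (h' t) ^ 2 * w t) + ∫ t in Ici (0:ℝ), w t ^ (-(1/3) : ℝ)) / 2

lemma sq_w_nonneg_ae (hw : GoodWeight w) {s : Set ℝ} (hs : s ⊆ Ici 0)
    (hsm : MeasurableSet s) :
    0 ≤ᵐ[volume.restrict s] (fun t => (h' t) ^ 2 * w t) := by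
  rw [EventuallyLE, ae_restrict_iff' hsm]
  filter_upwards with t ht
  exact mul_nonneg (sq_nonneg _) (hw.pos (hs ht)).le

lemma IsHw.tail_bound (hw : GoodWeight w) (hh : IsHw w h h') {x : ℝ} (hx : 0 ≤ x) :
    ∫ t in Ici x, |h' t| ≤ Kc w h' * w x ^ (-(1/3) : ℝ) := by
  set A := ∫ t in Ici (0:ℝ), (h' t) ^ 2 * w t with hA
  set C := ∫ t in Ici (0:ℝ), w t ^ (-(1/3) : ℝ) with hC
  have hwx : 0 < w x := hw.pos hx
  set ε := w x ^ (-(1/3) : ℝ) with hε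
  have hεpos : 0 < ε := Real.rpow_pos_of_pos hwx _
  have hsub : Ici x ⊆ Ici (0:ℝ) := Ici_subset_Ici.2 hx
  have hint1 : IntegrableOn (fun t => (h' t) ^ 2 * w t) (Ici x) := hh.2.1.mono_set hsub
  have hint2 : IntegrableOn (fun t => (w t)⁻¹) (Ici x) := hw.inv_integrable.mono_set hsub
  have hint3 : IntegrableOn (fun t => w t ^ (-(1/3) : ℝ)) (Ici x) := hw.2.2.2.mono_set hsub
  -- step 1: pointwise bound and integrate
  have step1 : ∫ t in Ici x, |h' t| ≤
      ∫ t in Ici x, (ε * ((h' t) ^ 2 * w t) + ε⁻¹ * (w t)⁻¹) / 2 := by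
    refine setIntegral_mono_on (((hh.deriv_integrable hw).mono_set hsub).abs)
      (((hint1.const_mul ε).add (hint2.const_mul ε⁻¹)).div_const 2)
      measurableSet_Ici (fun t ht => ?_)
    have hwt : 0 < w t := hw.pos (hsub ht)
    have := abs_le_sq_aux (a := h' t) (mul_pos hεpos hwt)
    calc |h' t| ≤ ((h' t) ^ 2 * (ε * w t) + (ε * w t)⁻¹) / 2 := this
      _ = (ε * ((h' t) ^ 2 * w t) + ε⁻¹ * (w t)⁻¹) / 2 := by rw [mul_inv]; ring
  -- step 2: evaluate RHS
  have step2 : ∫ t in Ici x, (ε * ((h' t) ^ 2 * w t) + ε⁻¹ * (w t)⁻¹) / 2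
      = (ε * ∫ t in Ici x, (h' t) ^ 2 * w t) / 2
        + (ε⁻¹ * ∫ t in Ici x, (w t)⁻¹) / 2 := by
    rw [integral_div, integral_add (hint1.const_mul ε) (hint2.const_mul ε⁻¹),
      integral_const_mul, integral_const_mul]
    ring
  -- step 3
  have step3 : ∫ t in Ici x, (h' t) ^ 2 * w t ≤ A :=
    setIntegral_mono_set hh.2.1 (sq_w_nonneg_ae hw (subset_refl _) measurableSet_Ici)
      (HasSubset.Subset.eventuallyLE hsub)
  -- step 4
  have step4 : ∫ t in Ici x, (w t)⁻¹ ≤ w x ^ (-(2/3) : ℝ) * C := by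
    have p1 : ∫ t in Ici x, (w t)⁻¹
        ≤ ∫ t in Ici x, w x ^ (-(2/3) : ℝ) * w t ^ (-(1/3) : ℝ) := by
      refine setIntegral_mono_on hint2 (hint3.const_mul _) measurableSet_Ici
        (fun t ht => ?_)
      have hwt : 0 < w t := hw.pos (hsub ht)
      have hle : w x ≤ w t := hw.2.1 hx (hsub ht) ht
      have e1 : (w t)⁻¹ = w t ^ (-(2/3) : ℝ) * w t ^ (-(1/3) : ℝ) := by
        rw [← Real.rpow_add hwt, ← Real.rpow_neg_one]
        norm_num
      rw [e1]
      exact mul_le_mul_of_nonneg_right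
        (Real.rpow_le_rpow_of_nonpos hwx hle (by norm_num))
        (Real.rpow_nonneg hwt.le _)
    have p2 : ∫ t in Ici x, w x ^ (-(2/3) : ℝ) * w t ^ (-(1/3) : ℝ)
        = w x ^ (-(2/3) : ℝ) * ∫ t in Ici x, w t ^ (-(1/3) : ℝ) := integral_const_mul _ _
    have p3 : ∫ t in Ici x, w t ^ (-(1/3) : ℝ) ≤ C := by
      refine setIntegral_mono_set hw.2.2.2 ?_ (HasSubset.Subset.eventuallyLE hsub)
      rw [EventuallyLE, ae_restrict_iff' measurableSet_Ici]
      filter_upwards with t ht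
      exact Real.rpow_nonneg (hw.pos ht).le _
    calc ∫ t in Ici x, (w t)⁻¹ ≤ _ := p1
      _ = _ := p2
      _ ≤ w x ^ (-(2/3) : ℝ) * C :=
        mul_le_mul_of_nonneg_left p3 (Real.rpow_nonneg hwx.le _)
  -- combine
  have hinv : ε⁻¹ = w x ^ ((1:ℝ)/3) := by
    rw [hε, show (-(1/3) : ℝ) = -(1/3) from rfl, Real.rpow_neg hwx.le, inv_inv]
  have hkey : ε⁻¹ * (w x ^ (-(2/3) : ℝ) * C) = C * ε := by
    rw [hinv, hε, ← mul_assoc, ← Real.rpow_add hwx]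
    norm_num
    ring
  have hC0 : 0 ≤ ∫ t in Ici x, (w t)⁻¹ := by
    refine setIntegral_nonneg measurableSet_Ici (fun t ht => ?_)
    exact (inv_nonneg).2 (hw.pos (hsub ht)).le
  calc ∫ t in Ici x, |h' t| ≤ _ := step1
    _ = (ε * ∫ t in Ici x, (h' t) ^ 2 * w t) / 2 + (ε⁻¹ * ∫ t in Ici x, (w t)⁻¹) / 2 := step2
    _ ≤ (ε * A) / 2 + (ε⁻¹ * (w x ^ (-(2/3) : ℝ) * C)) / 2 := by
        have l1 := mul_le_mul_of_nonneg_left step3 hεpos.le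
        have l2 := mul_le_mul_of_nonneg_left step4 (inv_nonneg.2 hεpos.le)
        linarith
    _ = Kc w h' * ε := by rw [hkey, Kc, ← hA, ← hC]; ring

lemma IsHw.intervalIntegrable (hw : GoodWeight w) (hh : IsHw w h h')
    {a b : ℝ} (ha : 0 ≤ a) (hab : a ≤ b) : IntervalIntegrable h volume a b := by
  have hsub : uIcc a b ⊆ Ici 0 := by
    rw [uIcc_of_le hab]
    exact (Icc_subset_Ici_iff hab).2 ha
  exact ((hh.contOn hw).mono hsub).intervalIntegrable

lemma no_pos_limit (hw : GoodWeight w) (hh : IsHw w h h') {L M : ℝ}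
    (hL : Tendsto h atTop (nhds L)) (hpos : 0 < L)
    (hM : Tendsto (Fop h) atTop (nhds M)) : False := by
  -- find x0 from which h ≥ L/2
  have hev : ∀ᶠ t in atTop, L / 2 ≤ h t :=
    hL.eventually (eventually_ge_nhds (by linarith))
  obtain ⟨x0, hx0⟩ := (hev.and (eventually_ge_atTop (0:ℝ))).exists_forall_of_atTop
  have hx00 : (0:ℝ) ≤ x0 := (hx0 x0 le_rfl).2
  set u : ℝ → ℝ := fun x => ∫ y in (0:ℝ)..x, h y with hu
  have hgrow : ∀ x, x0 ≤ x → u x0 + L / 2 * (x - x0) ≤ u x := by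
    intro x hx
    have hxx : (0:ℝ) ≤ x := le_trans hx00 hx
    have hi1 : IntervalIntegrable h volume 0 x0 := hh.intervalIntegrable hw le_rfl hx00
    have hi2 : IntervalIntegrable h volume x0 x := hh.intervalIntegrable hw hx00 hx
    have hsplit : u x = u x0 + ∫ y in x0..x, h y := by
      rw [hu]
      simp only
      rw [← intervalIntegral.integral_add_adjacent_intervals hi1 hi2]
    have hmono : L / 2 * (x - x0) ≤ ∫ y in x0..x, h y := by
      have h0 := intervalIntegral.integral_mono_on hx
        (intervalIntegrable_const (c := L / 2)) hi2
        (fun t ht => (hx0 t ht.1).1)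
      simp only [intervalIntegral.integral_const, smul_eq_mul] at h0
      linarith
    linarith [hsplit.ge, hmono]
  have hutop : Tendsto u atTop atTop := by
    have hlin : Tendsto (fun x => u x0 + L / 2 * (x - x0)) atTop atTop := by
      refine tendsto_atTop_add_const_left _ _ ?_
      exact (tendsto_atTop_add_const_right _ (-x0) tendsto_id).const_mul_atTop (by linarith)
    exact tendsto_atTop_mono' _ (eventually_atTop.2 ⟨x0, hgrow⟩) hlin
  have hFtop : Tendsto (Fop h) atTop atTop := by
    have hev2 : ∀ᶠ x in atTop, L / 2 * u x ≤ Fop h x := by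
      filter_upwards [hev, hutop.eventually_ge_atTop 0] with x h1 h2
      exact mul_le_mul_of_nonneg_right h1 h2
    exact tendsto_atTop_mono' _ hev2 (hutop.const_mul_atTop (by linarith))
  exact not_tendsto_atTop_of_tendsto_nhds hM hFtop

lemma forward_dir (hw : GoodWeight w) (hh : IsHw w h h')
    (hF : ∃ g' : ℝ → ℝ, IsHw w (Fop h) g') : Tendsto h atTop (nhds 0) := by
  obtain ⟨g', hg⟩ := hF
  have hFlim := hg.tendsto_limit hw
  have hlim := hh.tendsto_limit hw
  set L := h 0 + ∫ t in Ioi 0, h' t with hLdef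
  suffices hL0 : L = 0 by rwa [hL0] at hlim
  by_contra hne
  rcases lt_or_gt_of_ne hne with hlt | hgt
  · have hhneg : IsHw w (fun x => -h x) (fun x => -h' x) := by
      refine ⟨hh.1.neg, hh.2.1.congr_fun (fun x _ => by ring) measurableSet_Ici, ?_⟩
      intro x hx
      have := hh.2.2 x hx
      rw [intervalIntegral.integral_neg]
      simp only
      linarith
    have hFeq : Fop (fun x => -h x) = Fop h := by
      funext x
      simp only [Fop, intervalIntegral.integral_neg]
      ring
    exact no_pos_limit hw hhneg hlim.neg (by linarith) (hFeq ▸ hFlim)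
  · exact no_pos_limit hw hh hlim hgt hFlim

lemma parts_aux {f : ℝ → ℝ} (hfm : Measurable f) (hfi : Integrable f) (c : ℝ)
    {x : ℝ} (hx : 0 ≤ x) :
    ∫ y in (0:ℝ)..x, (f y * (∫ z in (0:ℝ)..y, prim c f z) + (prim c f y) ^ 2)
      = prim c f x * ∫ y in (0:ℝ)..x, prim c f y := by
  set q : ℝ → ℝ := prim c f with hq
  have hqc : Continuous q := prim_continuous hfi
  set V : ℝ → ℝ := fun t => ∫ z in (0:ℝ)..t, f z with hV
  have hVc : Continuous V := hfi.continuous_primitive 0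
  set u : ℝ → ℝ := fun t => ∫ z in (0:ℝ)..t, q z with hu
  have huc : Continuous u :=
    intervalIntegral.continuous_primitive (fun a b => hqc.intervalIntegrable a b) 0
  set μ := volume.restrict (Ioc (0:ℝ) x) with hμ
  have hfiμ : Integrable f μ := hfi.restrict
  have hqμ : Integrable q μ := hqc.integrableOn_Ioc
  -- bound for u on Icc 0 x
  obtain ⟨B, hB⟩ := IsCompact.exists_bound_of_continuousOn isCompact_Icc
    (huc.continuousOn (s := Icc (0:ℝ) x))
  -- integrability of f * u on μ
  have hfu : Integrable (fun y => f y * u y) μ := by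
    refine Integrable.mono' (g := fun y => B * |f y|) (hfiμ.abs.const_mul B)
      ((hfm.mul huc.measurable).aestronglyMeasurable) ?_
    rw [hμ, ae_restrict_iff' measurableSet_Ioc]
    filter_upwards with y hy
    rw [Real.norm_eq_abs, abs_mul, mul_comm]
    exact mul_le_mul_of_nonneg_right
      (hB y ⟨hy.1.le, hy.2⟩) (abs_nonneg _)
  have hqV : Integrable (fun z => q z * V z) μ := (hqc.mul hVc).integrableOn_Ioc
  -- the double integral function
  set Φ : ℝ → ℝ → ℝ := fun y z => if z ≤ y then f y * q z else 0 with hΦ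
  have hΦint : Integrable (Function.uncurry Φ) (μ.prod μ) := by
    have base : Integrable (fun p : ℝ × ℝ => f p.1 * q p.2) (μ.prod μ) :=
      hfiμ.mul_prod hqμ
    have hset : MeasurableSet {p : ℝ × ℝ | p.2 ≤ p.1} :=
      measurableSet_le measurable_snd measurable_fst
    have : Function.uncurry Φ =
        ({p : ℝ × ℝ | p.2 ≤ p.1}).indicator (fun p => f p.1 * q p.2) := by
      funext p
      simp only [Function.uncurry, hΦ, Set.indicator_apply, Set.mem_setOf_eq]
    rw [this]
    exact base.indicator hset
  have swap := MeasureTheory.integral_integral_swap hΦint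
  -- inner integral, first orientation
  have inner1 : ∀ y ∈ Ioc (0:ℝ) x, ∫ z, Φ y z ∂μ = f y * u y := by
    intro y hy
    have e1 : (fun z => Φ y z) = (Iic y).indicator (fun z => f y * q z) := by
      funext z
      simp only [hΦ, Set.indicator_apply, Set.mem_Iic]
    rw [e1, integral_indicator measurableSet_Iic, hμ,
      Measure.restrict_restrict measurableSet_Iic]
    have e2 : Iic y ∩ Ioc 0 x = Ioc 0 y := by
      ext z
      simp only [mem_inter_iff, mem_Iic, mem_Ioc]
      constructor
      · rintro ⟨h1, h2, _⟩; exact ⟨h2, h1⟩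
      · rintro ⟨h1, h2⟩; exact ⟨h2, h1, h2.trans hy.2⟩
    rw [e2, integral_const_mul]
    congr 1
    rw [hu]
    simp only
    rw [intervalIntegral.integral_of_le hy.1.le]
  -- inner integral, second orientation
  have inner2 : ∀ z ∈ Ioc (0:ℝ) x, ∫ y, Φ y z ∂μ = q z * (V x - V z) := by
    intro z hz
    have e1 : (fun y => Φ y z) = (Ici z).indicator (fun y => f y * q z) := by
      funext y
      simp only [hΦ, Set.indicator_apply, Set.mem_Ici]
    rw [e1, integral_indicator measurableSet_Ici, hμ,
      Measure.restrict_restrict measurableSet_Ici]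
    have e2 : Ici z ∩ Ioc 0 x = Icc z x := by
      ext y
      simp only [mem_inter_iff, mem_Ici, mem_Ioc, mem_Icc]
      constructor
      · rintro ⟨h1, _, h3⟩; exact ⟨h1, h3⟩
      · rintro ⟨h1, h2⟩; exact ⟨h1, hz.1.trans_le h1, h2⟩
    have hsubV := intervalIntegral.integral_interval_sub_left
      (hfi.intervalIntegrable (a := 0) (b := x)) (hfi.intervalIntegrable (a := 0) (b := z))
    rw [e2, integral_Icc_eq_integral_Ioc, integral_mul_const, mul_comm,
      ← intervalIntegral.integral_of_le hz.2]
    congr 1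
    rw [hV]
    simp only
    exact hsubV.symm
  -- rewrite both sides of swap
  have lhs_eq : ∫ y, ∫ z, Φ y z ∂μ ∂μ = ∫ y in Ioc (0:ℝ) x, f y * u y := by
    rw [hμ]
    exact setIntegral_congr_fun measurableSet_Ioc (fun y hy => inner1 y hy)
  have rhs_eq : ∫ z, ∫ y, Φ y z ∂μ ∂μ
      = V x * (∫ z in Ioc (0:ℝ) x, q z) - ∫ z in Ioc (0:ℝ) x, q z * V z := by
    rw [hμ]
    rw [setIntegral_congr_fun measurableSet_Ioc (fun z hz => inner2 z hz)]
    have : ∀ z, q z * (V x - V z) = V x * q z - q z * V z := fun z => by ring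
    simp_rw [this]
    rw [integral_sub ((hqμ.const_mul (V x)).congr (by rfl)) hqV, integral_const_mul]
  -- key identity
  have key : ∫ y in Ioc (0:ℝ) x, f y * u y
      = V x * (∫ z in Ioc (0:ℝ) x, q z) - ∫ z in Ioc (0:ℝ) x, q z * V z := by
    rw [← lhs_eq, ← rhs_eq, swap]
  -- now the final computation
  have hux : u x = ∫ z in Ioc (0:ℝ) x, q z := by
    rw [hu]; simp only; rw [intervalIntegral.integral_of_le hx]
  have hq2 : ∫ y in Ioc (0:ℝ) x, (q y) ^ 2
      = c * u x + ∫ z in Ioc (0:ℝ) x, q z * V z := by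
    have e : ∀ y, (q y) ^ 2 = c * q y + q y * V y := by
      intro y
      have : q y = c + V y := rfl
      rw [this]; ring
    simp_rw [e]
    rw [integral_add (hqμ.const_mul c) hqV, integral_const_mul, hux]
  show ∫ y in (0:ℝ)..x, (f y * u y + q y ^ 2) = q x * u x
  rw [intervalIntegral.integral_of_le hx,
    integral_add hfu ((show Continuous (fun y => q y ^ 2) from hqc.pow 2).integrableOn_Ioc), key, hq2, ← hux]
  have hqx : q x = c + V x := rfl
  rw [hqx]
  ring

section backward
variable (hw : GoodWeight w) (hh : IsHw w h h') (htend : Tendsto h atTop (nhds 0))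

lemma IsHw.rep_tail (hw : GoodWeight w) (hh : IsHw w h h')
    (htend : Tendsto h atTop (nhds 0)) {x : ℝ} (hx : 0 ≤ x) :
    h x = -∫ t in Ioi x, h' t := by
  have hzero : h 0 + ∫ t in Ioi 0, h' t = 0 :=
    tendsto_nhds_unique (hh.tendsto_limit hw) htend
  have hint := hh.deriv_integrable hw
  have hsplit : ∫ t in Ioi 0, h' t
      = (∫ t in Ioc 0 x, h' t) + ∫ t in Ioi x, h' t := by
    rw [← setIntegral_union (Ioc_disjoint_Ioi_same) measurableSet_Ioi
      (hint.mono_set (fun t ht => le_of_lt ht.1))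
      (hint.mono_set (Ioi_subset_Ici_self.trans (Ici_subset_Ici.2 hx)))]
    · rw [Ioc_union_Ioi_eq_Ioi hx]
  have hfx : h x = h 0 + ∫ t in Ioc 0 x, h' t := by
    rw [hh.2.2 x hx, intervalIntegral.integral_of_le hx]
  linarith [hfx, hsplit, hzero]

lemma IsHw.ptw_bound (hw : GoodWeight w) (hh : IsHw w h h')
    (htend : Tendsto h atTop (nhds 0)) {x : ℝ} (hx : 0 ≤ x) :
    |h x| ≤ Kc w h' * w x ^ (-(1/3) : ℝ) := by
  rw [hh.rep_tail hw htend hx, abs_neg]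
  calc |∫ t in Ioi x, h' t| ≤ ∫ t in Ioi x, |h' t| := by
        simpa [Real.norm_eq_abs] using
          norm_integral_le_integral_norm (μ := volume.restrict (Ioi x)) h'
    _ = ∫ t in Ici x, |h' t| := (integral_Ici_eq_integral_Ioi).symm
    _ ≤ Kc w h' * w x ^ (-(1/3) : ℝ) := hh.tail_bound hw hx

end backward

set_option maxHeartbeats 2000000 in
lemma backward_dir (hw : GoodWeight w) (hh : IsHw w h h')
    (htend : Tendsto h atTop (nhds 0)) : ∃ g' : ℝ → ℝ, IsHw w (Fop h) g' := by
  set K := Kc w h' with hK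
  have hK0 : 0 ≤ K := by
    rw [hK, Kc]
    have a1 : 0 ≤ ∫ t in Ici (0:ℝ), (h' t) ^ 2 * w t :=
      setIntegral_nonneg measurableSet_Ici
        (fun t ht => mul_nonneg (sq_nonneg _) (hw.pos ht).le)
    have a2 : 0 ≤ ∫ t in Ici (0:ℝ), w t ^ (-(1/3) : ℝ) :=
      setIntegral_nonneg measurableSet_Ici
        (fun t ht => Real.rpow_nonneg (hw.pos ht).le _)
    linarith
  -- integrability of h on Ici 0
  have hInt_h : IntegrableOn h (Ici 0) := by
    refine Integrable.mono' (hw.2.2.2.const_mul K)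
      (((hh.contOn hw).aemeasurable measurableSet_Ici).aestronglyMeasurable) ?_
    rw [ae_restrict_iff' measurableSet_Ici]
    filter_upwards with x hx
    exact hh.ptw_bound hw htend hx
  set M := ∫ t in Ici (0:ℝ), |h t| with hM
  have hMu : ∀ x : ℝ, 0 ≤ x → |∫ y in (0:ℝ)..x, h y| ≤ M := by
    intro x hx
    calc |∫ y in (0:ℝ)..x, h y| ≤ ∫ y in (0:ℝ)..x, |h y| :=
        intervalIntegral.abs_integral_le_integral_abs hx
      _ = ∫ y in Ioc (0:ℝ) x, |h y| := intervalIntegral.integral_of_le hx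
      _ ≤ M := by
        refine setIntegral_mono_set hInt_h.abs ?_
          (HasSubset.Subset.eventuallyLE (fun t ht => le_of_lt ht.1))
        rw [EventuallyLE, ae_restrict_iff' measurableSet_Ici]
        filter_upwards with t _
        exact abs_nonneg _
  -- the candidate derivative
  set q : ℝ → ℝ := prim (h 0) (ext0 h') with hqdef
  have hqc : Continuous q := prim_continuous (hh.ext0_integrable hw)
  set u : ℝ → ℝ := fun t => ∫ z in (0:ℝ)..t, q z with hudef
  have huc : Continuous u :=
    intervalIntegral.continuous_primitive (fun a b => hqc.intervalIntegrable a b) 0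
  set g' : ℝ → ℝ := fun y => ext0 h' y * u y + q y ^ 2 with hg'def
  have hg'm : Measurable g' :=
    (hh.ext0_measurable.mul huc.measurable).add (hqc.measurable.pow_const 2)
  -- q agrees with h, u agrees with ∫ h, on Ici 0
  have hqeq : ∀ x : ℝ, 0 ≤ x → q x = h x := fun x hx => (hh.eq_prim hx).symm
  have hueq : ∀ x : ℝ, 0 ≤ x → u x = ∫ y in (0:ℝ)..x, h y := by
    intro x hx
    refine intervalIntegral.integral_congr (fun y hy => ?_)
    rw [uIcc_of_le hx] at hy
    exact hqeq y hy.1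
  have hbound_int : IntegrableOn
      (fun x => 2 * M ^ 2 * ((h' x) ^ 2 * w x) + 2 * K ^ 4 * w x ^ (-(1/3) : ℝ)) (Ici 0) :=
    (hh.2.1.const_mul _).add (hw.2.2.2.const_mul _)
  have haesm : AEStronglyMeasurable (fun x => g' x ^ 2 * w x) (volume.restrict (Ici 0)) :=
    ((hg'm.pow_const 2).aemeasurable.mul
      (hw.contOn.aemeasurable measurableSet_Ici)).aestronglyMeasurable
  have hg2int : IntegrableOn (fun x => g' x ^ 2 * w x) (Ici 0) := by
    refine Integrable.mono' hbound_int haesm ?_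
    rw [ae_restrict_iff' measurableSet_Ici]
    filter_upwards with x hx
    have hwx : 0 < w x := hw.pos hx
    have hUM : |u x| ≤ M := by rw [hueq x hx]; exact hMu x hx
    have hhx : |h x| ≤ K * w x ^ (-(1/3) : ℝ) := hh.ptw_bound hw htend hx
    have e1 : g' x = h' x * u x + h x ^ 2 := by
      rw [hg'def]
      simp only [ext0]
      rw [hqeq x hx, if_pos (mem_Ici.mp hx)]
    have e2 : (w x ^ (-(1/3) : ℝ)) ^ (4:ℕ) * w x = w x ^ (-(1/3) : ℝ) := by
      rw [← Real.rpow_natCast (w x ^ (-(1/3):ℝ)) 4, ← Real.rpow_mul hwx.le]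
      calc w x ^ ((-(1/3):ℝ) * (4:ℕ)) * w x
          = w x ^ ((-(1/3):ℝ) * (4:ℕ)) * w x ^ (1:ℝ) := by rw [Real.rpow_one]
        _ = w x ^ ((-(1/3):ℝ) * (4:ℕ) + 1) := (Real.rpow_add hwx _ _).symm
        _ = w x ^ (-(1/3):ℝ) := by norm_num
    have hb : h x ^ 4 * w x ≤ K ^ 4 * w x ^ (-(1/3) : ℝ) := by
      have h4 : h x ^ 4 ≤ (K * w x ^ (-(1/3) : ℝ)) ^ 4 := by
        calc h x ^ 4 = |h x| ^ 4 := by rw [← abs_pow, abs_of_nonneg (by positivity)]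
          _ ≤ (K * w x ^ (-(1/3) : ℝ)) ^ 4 := pow_le_pow_left₀ (abs_nonneg _) hhx 4
      calc h x ^ 4 * w x ≤ (K * w x ^ (-(1/3) : ℝ)) ^ 4 * w x :=
            mul_le_mul_of_nonneg_right h4 hwx.le
        _ = K ^ 4 * ((w x ^ (-(1/3) : ℝ)) ^ (4:ℕ) * w x) := by ring
        _ = K ^ 4 * w x ^ (-(1/3) : ℝ) := by rw [e2]
    have hU2 : u x ^ 2 ≤ M ^ 2 := by
      calc u x ^ 2 = |u x| ^ 2 := (sq_abs _).symm
        _ ≤ M ^ 2 := pow_le_pow_left₀ (abs_nonneg _) hUM 2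
    have ha : (h' x * u x) ^ 2 * w x ≤ M ^ 2 * ((h' x) ^ 2 * w x) := by
      calc (h' x * u x) ^ 2 * w x = u x ^ 2 * ((h' x) ^ 2 * w x) := by ring
        _ ≤ M ^ 2 * ((h' x) ^ 2 * w x) :=
          mul_le_mul_of_nonneg_right hU2 (mul_nonneg (sq_nonneg _) hwx.le)
    have hsq : (h' x * u x + h x ^ 2) ^ 2 * w x
        ≤ 2 * ((h' x * u x) ^ 2 * w x) + 2 * (h x ^ 4 * w x) := by
      nlinarith [mul_nonneg (sq_nonneg (h' x * u x - h x ^ 2)) hwx.le]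
    rw [Real.norm_eq_abs, abs_of_nonneg (mul_nonneg (sq_nonneg _) hwx.le), e1]
    linarith
  refine ⟨g', hg'm, hg2int, ?_⟩
  intro x hx
  have hparts := parts_aux hh.ext0_measurable (hh.ext0_integrable hw) (h 0) hx
  have hF0 : Fop h 0 = 0 := by simp [Fop]
  have hgi : ∫ y in (0:ℝ)..x, g' y = q x * u x := by
    rw [hg'def]
    simpa using hparts
  have hFx : Fop h x = q x * u x := by
    show h x * (∫ y in (0:ℝ)..x, h y) = q x * u x
    rw [hqeq x hx, hueq x hx]
  rw [hF0, hFx, hgi, zero_add]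

/-- `F(h) ∈ H_w` iff `h(x) → 0` as `x → ∞`. -/
theorem stmt8 (w : ℝ → ℝ) (hw : GoodWeight w) (h h' : ℝ → ℝ) (hh : IsHw w h h') :
    (∃ g' : ℝ → ℝ, IsHw w (Fop h) g') ↔ Filter.Tendsto h Filter.atTop (nhds 0) :=
  ⟨forward_dir hw hh, backward_dir hw hh⟩
end helpers
end

section
/- There exists a constant C_F > 0, depending only on w, such that for every h ∈ H_w with lim_{x→∞} h(x) = 0 one has F(h) ∈ H_w and ‖F(h)‖_w ≤ C_F · ‖h‖_w². -/
open MeasureTheory Set Filter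

lemma sq_add_le_two_sq (a b : ℝ) : (a + b) ^ 2 ≤ 2 * a ^ 2 + 2 * b ^ 2 := by
  nlinarith [sq_nonneg (a - b)]

lemma final_sqrt_bound (s e n i : ℝ) (hs : 0 ≤ s) (he : 0 ≤ e) (hen : e ≤ n)
    (hi : i ≤ 4 * (s ^ 2) ^ 3 * e ^ 2) : Real.sqrt i ≤ (2 * s ^ 3 + 1) * n := by
  have hn : 0 ≤ n := he.trans hen
  have h1 : i ≤ (2 * s ^ 3 * n) ^ 2 := by
    nlinarith [pow_nonneg hs 3, mul_self_le_mul_self he hen, sq_nonneg (s ^ 3)]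
  calc Real.sqrt i ≤ Real.sqrt ((2 * s ^ 3 * n) ^ 2) := Real.sqrt_le_sqrt h1
    _ = 2 * s ^ 3 * n := Real.sqrt_sq (by positivity)
    _ ≤ (2 * s ^ 3 + 1) * n := by nlinarith [pow_nonneg hs 3]

set_option maxHeartbeats 4000000 in
/-- quadratic bound `‖F(h)‖_w ≤ C_F ‖h‖_w²` on `H_w⁰`. -/
theorem stmt9 (w : ℝ → ℝ) (hw : GoodWeight w) :
    ∃ CF > (0:ℝ), ∀ h h' : ℝ → ℝ, IsHw w h h' →
      Filter.Tendsto h Filter.atTop (nhds 0) →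
      ∃ g' : ℝ → ℝ, IsHw w (Fop h) g' ∧
        normW w (Fop h) g' ≤ CF * (normW w h h') ^ 2 := by
  obtain ⟨hw1, hwmono, hwcd, hwint⟩ := hw
  set A : ℝ := ∫ x in Set.Ici (0:ℝ), w x ^ (-(1/3):ℝ) with hAdef
  have hwpos : ∀ x, 0 ≤ x → 0 < w x := fun x hx => lt_of_lt_of_le one_pos (hw1 x hx)
  have hwcont : ContinuousOn w (Set.Ici 0) := hwcd.continuousOn
  have hwmeas : AEMeasurable w (volume.restrict (Set.Ici (0:ℝ))) :=
    hwcont.aemeasurable measurableSet_Ici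
  have hA0 : 0 ≤ A :=
    setIntegral_nonneg measurableSet_Ici fun x hx => Real.rpow_nonneg (hwpos x hx).le _
  refine ⟨2 * Real.sqrt A ^ 3 + 1, by positivity, ?_⟩
  intro h h' hh htend
  obtain ⟨hd_meas, hE_int, hrep⟩ := hh
  set E : ℝ := ∫ x in Set.Ici (0:ℝ), (h' x) ^ 2 * w x with hEdef
  have hE0 : 0 ≤ E :=
    setIntegral_nonneg measurableSet_Ici fun x hx => mul_nonneg (sq_nonneg _) (hwpos x hx).le
  -- integrability of w⁻¹ on Ici 0
  have hwinv_le : ∀ x ∈ Set.Ici (0:ℝ), (w x)⁻¹ ≤ w x ^ (-(1/3):ℝ) := by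
    intro x hx
    have h1 : (w x)⁻¹ = w x ^ (-1:ℝ) := (Real.rpow_neg_one (w x)).symm
    rw [h1]
    exact Real.rpow_le_rpow_of_exponent_le (hw1 x hx) (by norm_num)
  have hwinv_int : IntegrableOn (fun x => (w x)⁻¹) (Set.Ici (0:ℝ)) := by
    refine hwint.mono' hwmeas.inv.aestronglyMeasurable ?_
    filter_upwards [ae_restrict_mem measurableSet_Ici] with x hx
    rw [Real.norm_eq_abs, abs_of_nonneg (inv_nonneg.2 (hwpos x hx).le)]
    exact hwinv_le x hx
  -- h' is integrable on Ici 0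
  have hd_int : IntegrableOn h' (Set.Ici (0:ℝ)) := by
    refine (((hE_int.add hwint).div_const 2).mono' hd_meas.aestronglyMeasurable ?_)
    filter_upwards [ae_restrict_mem measurableSet_Ici] with x hx
    have hb : 1 ≤ w x := hw1 x hx
    have hb0 : 0 < w x := hwpos x hx
    have h13 : (w x)⁻¹ ≤ w x ^ (-(1/3):ℝ) := hwinv_le x hx
    have hsq : h' x ^ 2 = |h' x| ^ 2 := (sq_abs _).symm
    have key : |h' x| ≤ (h' x ^ 2 * w x + (w x)⁻¹) / 2 := by
      rw [hsq]
      have hbi : 0 < (w x)⁻¹ := inv_pos.2 hb0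
      have e2 : 2 * (|h' x| * w x) ≤ (|h' x| * w x) ^ 2 + 1 := by
        nlinarith [sq_nonneg (|h' x| * w x - 1)]
      have e3 : 2 * |h' x| = (2 * (|h' x| * w x)) * (w x)⁻¹ := by
        field_simp
      have e4 : (2 * (|h' x| * w x)) * (w x)⁻¹ ≤ ((|h' x| * w x) ^ 2 + 1) * (w x)⁻¹ :=
        mul_le_mul_of_nonneg_right e2 hbi.le
      have e5 : ((|h' x| * w x) ^ 2 + 1) * (w x)⁻¹ = |h' x| ^ 2 * w x + (w x)⁻¹ := by
        field_simp
      linarith [e3 ▸ e4, e5 ▸ e4]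
    rw [Real.norm_eq_abs]
    calc |h' x| ≤ (h' x ^ 2 * w x + (w x)⁻¹) / 2 := key
      _ ≤ (h' x ^ 2 * w x + w x ^ (-(1/3):ℝ)) / 2 := by linarith
  -- the tail representation
  have hd_int_Ioi : ∀ x : ℝ, 0 ≤ x → IntegrableOn h' (Set.Ioi x) := fun x hx =>
    hd_int.mono_set fun t ht => le_of_lt (lt_of_le_of_lt hx ht)
  have hlim : h 0 + ∫ t in Set.Ioi (0:ℝ), h' t = 0 := by
    have h1 : Tendsto (fun x : ℝ => ∫ t in (0:ℝ)..x, h' t) atTop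
        (nhds (∫ t in Set.Ioi (0:ℝ), h' t)) :=
      intervalIntegral_tendsto_integral_Ioi 0 (hd_int_Ioi 0 le_rfl) tendsto_id
    have h2 : Tendsto h atTop (nhds (h 0 + ∫ t in Set.Ioi (0:ℝ), h' t)) := by
      refine (tendsto_const_nhds.add h1).congr' ?_
      filter_upwards [eventually_ge_atTop (0:ℝ)] with x hx
      exact (hrep x hx).symm
    exact (tendsto_nhds_unique h2 htend)
  have htail : ∀ x : ℝ, 0 ≤ x → h x = -∫ t in Set.Ioi x, h' t := by
    intro x hx
    have hsplit : (∫ t in Set.Ioi (0:ℝ), h' t)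
        = (∫ t in Set.Ioc 0 x, h' t) + ∫ t in Set.Ioi x, h' t := by
      rw [← Set.Ioc_union_Ioi_eq_Ioi hx]
      exact setIntegral_union Ioc_disjoint_Ioi_same measurableSet_Ioi
        (hd_int.mono_set fun t ht => ht.1.le) (hd_int_Ioi x hx)
    have := hrep x hx
    rw [intervalIntegral.integral_of_le hx] at this
    rw [this]
    linarith [hlim, hsplit]
  -- A is positive
  have hApos : 0 < A := by
    rw [hAdef, setIntegral_pos_iff_support_of_nonneg_ae ?hnn hwint]
    · refine lt_of_lt_of_le ?_ (measure_mono (?_ :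
        Set.Ici (0:ℝ) ⊆ Function.support (fun x => w x ^ (-(1/3):ℝ)) ∩ Set.Ici 0))
      · rw [Real.volume_Ici]; exact ENNReal.zero_lt_top
      · intro x hx
        exact ⟨ne_of_gt (Real.rpow_pos_of_pos (hwpos x hx) _), hx⟩
    case hnn =>
      filter_upwards [ae_restrict_mem measurableSet_Ici] with x hx
      exact Real.rpow_nonneg (hwpos x hx).le _
  have hsA : Real.sqrt A ^ 2 = A := Real.sq_sqrt hA0
  have hsApos : 0 < Real.sqrt A := Real.sqrt_pos.2 hApos
  -- tail integrals of h'^2 w are bounded by E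
  have hIoiIci : ∀ x : ℝ, 0 ≤ x → Set.Ioi x ⊆ Set.Ici (0:ℝ) :=
    fun x hx t ht => hx.trans ht.le
  have hEIoi_le : ∀ x : ℝ, 0 ≤ x → (∫ t in Set.Ioi x, h' t ^ 2 * w t) ≤ E := by
    intro x hx
    refine setIntegral_mono_set hE_int ?_ ((hIoiIci x hx).eventuallyLE)
    filter_upwards [ae_restrict_mem measurableSet_Ici] with t ht
    exact mul_nonneg (sq_nonneg _) (hwpos t ht).le
  have hAIoi_le : ∀ x : ℝ, 0 ≤ x → (∫ t in Set.Ioi x, w t ^ (-(1/3):ℝ)) ≤ A := by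
    intro x hx
    refine setIntegral_mono_set hwint ?_ ((hIoiIci x hx).eventuallyLE)
    filter_upwards [ae_restrict_mem measurableSet_Ici] with t ht
    exact Real.rpow_nonneg (hwpos t ht).le _
  -- the decay bound
  have hdecay : ∀ x, 0 ≤ x → |h x| ≤ Real.sqrt (A * E) * w x ^ (-(1/3):ℝ) := by
    intro x hx
    have hupos : 0 < w x ^ (-(1/3):ℝ) := Real.rpow_pos_of_pos (hwpos x hx) _
    rcases eq_or_lt_of_le hE0 with hE | hEpos
    · -- E = 0 : h' vanishes a.e. on Ici 0
      have hz : (fun t => h' t ^ 2 * w t) =ᵐ[volume.restrict (Set.Ici (0:ℝ))] 0 := by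
        refine (integral_eq_zero_iff_of_nonneg_ae ?_ hE_int).1 hE.symm
        filter_upwards [ae_restrict_mem measurableSet_Ici] with t ht
        exact mul_nonneg (sq_nonneg _) (hwpos t ht).le
      have hz' : h' =ᵐ[volume.restrict (Set.Ici (0:ℝ))] 0 := by
        filter_upwards [hz, ae_restrict_mem measurableSet_Ici] with t h1 h2
        rcases mul_eq_zero.1 h1 with h3 | h3
        · exact (pow_eq_zero_iff two_ne_zero).1 h3
        · exact absurd h3 (hwpos t h2).ne'
      have : (∫ t in Set.Ioi x, h' t) = 0 := by
        rw [integral_congr_ae (ae_restrict_of_ae_restrict_of_subset (hIoiIci x hx) hz')]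
        simp
      rw [htail x hx, this, neg_zero, abs_zero]
      positivity
    · -- E > 0
      have hsE : Real.sqrt E ^ 2 = E := Real.sq_sqrt hE0
      have hsEpos : 0 < Real.sqrt E := Real.sqrt_pos.2 hEpos
      set u := w x ^ (-(1/3):ℝ) with hu
      set ε := Real.sqrt A * u / Real.sqrt E with hε
      have hεpos : 0 < ε := by positivity
      have hpt : ∀ t ∈ Set.Ioi x, |h' t| ≤ (ε * (h' t ^ 2 * w t) + ε⁻¹ * (w t)⁻¹) / 2 := by
        intro t ht
        have htI : (0:ℝ) ≤ t := hx.trans ht.le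
        have hb0 : 0 < w t := hwpos t htI
        have e2 : 2 * (|h' t| * (ε * w t)) ≤ (|h' t| * (ε * w t)) ^ 2 + 1 := by
          nlinarith [sq_nonneg (|h' t| * (ε * w t) - 1)]
        have e3 : 2 * |h' t| = (2 * (|h' t| * (ε * w t))) * (ε * w t)⁻¹ := by
          field_simp
        have e4 : (2 * (|h' t| * (ε * w t))) * (ε * w t)⁻¹
            ≤ ((|h' t| * (ε * w t)) ^ 2 + 1) * (ε * w t)⁻¹ :=
          mul_le_mul_of_nonneg_right e2 (inv_pos.2 (mul_pos hεpos hb0)).le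
        have e5 : ((|h' t| * (ε * w t)) ^ 2 + 1) * (ε * w t)⁻¹
            = ε * (h' t ^ 2 * w t) + ε⁻¹ * (w t)⁻¹ := by
          field_simp
          rw [sq_abs]; ring
        linarith [e3 ▸ e4, e5 ▸ e4]
      have hRHSint : IntegrableOn
          (fun t => (ε * (h' t ^ 2 * w t) + ε⁻¹ * (w t)⁻¹) / 2) (Set.Ioi x) :=
        (((hE_int.mono_set (hIoiIci x hx)).const_mul ε).add
          ((hwinv_int.mono_set (hIoiIci x hx)).const_mul ε⁻¹)).div_const 2
      have habs : |h x| ≤ ∫ t in Set.Ioi x, |h' t| := by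
        rw [htail x hx, abs_neg]
        have hni := norm_integral_le_integral_norm (μ := volume.restrict (Set.Ioi x)) h'
        simpa [Real.norm_eq_abs] using hni
      have hstep : (∫ t in Set.Ioi x, |h' t|)
          ≤ (ε * (∫ t in Set.Ioi x, h' t ^ 2 * w t)
            + ε⁻¹ * (∫ t in Set.Ioi x, (w t)⁻¹)) / 2 := by
        have := setIntegral_mono_on ((hd_int.mono_set (hIoiIci x hx)).abs) hRHSint
          measurableSet_Ioi hpt
        calc (∫ t in Set.Ioi x, |h' t|)
            ≤ ∫ t in Set.Ioi x, (ε * (h' t ^ 2 * w t) + ε⁻¹ * (w t)⁻¹) / 2 := this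
          _ = (ε * (∫ t in Set.Ioi x, h' t ^ 2 * w t)
              + ε⁻¹ * (∫ t in Set.Ioi x, (w t)⁻¹)) / 2 := by
            rw [integral_div, integral_add ((hE_int.mono_set (hIoiIci x hx)).const_mul ε)
              ((hwinv_int.mono_set (hIoiIci x hx)).const_mul ε⁻¹),
              integral_const_mul, integral_const_mul]
      have hW23 : w x ^ (-(2/3):ℝ) = u * u := by
        rw [hu, ← Real.rpow_add (hwpos x hx)]; norm_num
      have hWx : (∫ t in Set.Ioi x, (w t)⁻¹) ≤ w x ^ (-(2/3):ℝ) * A := by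
        have hpt2 : ∀ t ∈ Set.Ioi x, (w t)⁻¹ ≤ w x ^ (-(2/3):ℝ) * w t ^ (-(1/3):ℝ) := by
          intro t ht
          have htI : (0:ℝ) ≤ t := hx.trans ht.le
          have hwt : 0 < w t := hwpos t htI
          have hmono : w x ≤ w t := hwmono hx htI ht.le
          calc (w t)⁻¹ = w t ^ (-1:ℝ) := (Real.rpow_neg_one _).symm
            _ = w t ^ (-(2/3):ℝ) * w t ^ (-(1/3):ℝ) := by
              rw [← Real.rpow_add hwt]; norm_num
            _ ≤ w x ^ (-(2/3):ℝ) * w t ^ (-(1/3):ℝ) :=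
              mul_le_mul_of_nonneg_right
                (Real.rpow_le_rpow_of_nonpos (hwpos x hx) hmono (by norm_num))
                (Real.rpow_nonneg hwt.le _)
        calc (∫ t in Set.Ioi x, (w t)⁻¹)
            ≤ ∫ t in Set.Ioi x, w x ^ (-(2/3):ℝ) * w t ^ (-(1/3):ℝ) :=
            setIntegral_mono_on (hwinv_int.mono_set (hIoiIci x hx))
              ((hwint.mono_set (hIoiIci x hx)).const_mul _) measurableSet_Ioi hpt2
          _ = w x ^ (-(2/3):ℝ) * ∫ t in Set.Ioi x, w t ^ (-(1/3):ℝ) := integral_const_mul _ _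
          _ ≤ w x ^ (-(2/3):ℝ) * A :=
            mul_le_mul_of_nonneg_left (hAIoi_le x hx) (Real.rpow_nonneg (hwpos x hx).le _)
      have e1 : ε * E = Real.sqrt A * Real.sqrt E * u := by
        rw [hε, div_mul_eq_mul_div, div_eq_iff hsEpos.ne']; linear_combination (-(Real.sqrt A * u)) * hsE
      have e2 : ε⁻¹ * (w x ^ (-(2/3):ℝ) * A) = Real.sqrt A * Real.sqrt E * u := by
        rw [hε, hW23, inv_div, div_mul_eq_mul_div, div_eq_iff (mul_pos hsApos hupos).ne']; linear_combination (-(Real.sqrt E * u ^ 2)) * hsA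
      have hfinal : (ε * (∫ t in Set.Ioi x, h' t ^ 2 * w t)
          + ε⁻¹ * (∫ t in Set.Ioi x, (w t)⁻¹)) / 2 ≤ Real.sqrt A * Real.sqrt E * u := by
        have b1 : ε * (∫ t in Set.Ioi x, h' t ^ 2 * w t) ≤ ε * E :=
          mul_le_mul_of_nonneg_left (hEIoi_le x hx) hεpos.le
        have b2 : ε⁻¹ * (∫ t in Set.Ioi x, (w t)⁻¹) ≤ ε⁻¹ * (w x ^ (-(2/3):ℝ) * A) :=
          mul_le_mul_of_nonneg_left hWx (inv_pos.2 hεpos).le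
        linarith [e1, e2]
      rw [Real.sqrt_mul hA0]
      exact habs.trans (hstep.trans hfinal)
  -- continuous versions of h and its double primitive
  set f : ℝ → ℝ := Set.indicator (Set.Ici 0) h' with hfdef
  have hf_meas : Measurable f := hd_meas.indicator measurableSet_Ici
  have hf_int : Integrable f := (integrable_indicator_iff measurableSet_Ici).2 hd_int
  have hf_ii : ∀ a b : ℝ, IntervalIntegrable f volume a b := fun a b =>
    hf_int.intervalIntegrable
  set p : ℝ → ℝ := fun x => h 0 + ∫ t in (0:ℝ)..x, f t with hpdef
  have hp_cont : Continuous p :=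
    continuous_const.add (intervalIntegral.continuous_primitive hf_ii 0)
  have hfi_eq : ∀ x : ℝ, 0 ≤ x → (∫ t in (0:ℝ)..x, f t) = ∫ t in (0:ℝ)..x, h' t := by
    intro x hx
    rw [intervalIntegral.integral_of_le hx, intervalIntegral.integral_of_le hx]
    refine setIntegral_congr_fun measurableSet_Ioc fun t ht => ?_
    exact Set.indicator_of_mem (mem_Ici.2 ht.1.le) h'
  have hp_eq : ∀ x : ℝ, 0 ≤ x → p x = h x := by
    intro x hx
    show h 0 + (∫ t in (0:ℝ)..x, f t) = h x
    rw [hfi_eq x hx, ← hrep x hx]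
  set B : ℝ := Real.sqrt (A * E) with hBdef
  have hB0 : 0 ≤ B := Real.sqrt_nonneg _
  have hp_bd : ∀ x : ℝ, 0 ≤ x → |p x| ≤ B * w x ^ (-(1/3):ℝ) := by
    intro x hx; rw [hp_eq x hx]; exact hdecay x hx
  set P : ℝ → ℝ := Set.indicator (Set.Ici 0) p with hPdef
  have hP_meas : Measurable P := hp_cont.measurable.indicator measurableSet_Ici
  have hp_intOn : IntegrableOn p (Set.Ici (0:ℝ)) := by
    refine (hwint.const_mul B).mono' hp_cont.aestronglyMeasurable.restrict ?_
    filter_upwards [ae_restrict_mem measurableSet_Ici] with x hx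
    rw [Real.norm_eq_abs]; exact hp_bd x hx
  have hP_int : Integrable P := (integrable_indicator_iff measurableSet_Ici).2 hp_intOn
  set M : ℝ := B * A with hMdef
  have hM0 : 0 ≤ M := mul_nonneg hB0 hA0
  have hP_L1 : (∫ t, |P t|) ≤ M := by
    have e0 : (∫ t, |P t|) = ∫ t in Set.Ici (0:ℝ), |p t| := by
      rw [← integral_indicator measurableSet_Ici]
      congr 1; funext t
      by_cases ht : t ∈ Set.Ici (0:ℝ) <;>
        simp [hPdef, Set.indicator_of_mem, Set.indicator_of_notMem, ht]
    rw [e0]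
    calc (∫ t in Set.Ici (0:ℝ), |p t|)
        ≤ ∫ t in Set.Ici (0:ℝ), B * w t ^ (-(1/3):ℝ) :=
        setIntegral_mono_on hp_intOn.abs (hwint.const_mul B) measurableSet_Ici
          fun t ht => hp_bd t ht
      _ = B * A := integral_const_mul _ _
  set q : ℝ → ℝ := fun x => ∫ t in (0:ℝ)..x, P t with hqdef
  have hq_cont : Continuous q :=
    intervalIntegral.continuous_primitive (fun a b => hP_int.intervalIntegrable) 0
  have hq_bd : ∀ x : ℝ, |q x| ≤ M := by
    intro x
    have h1 : |q x| ≤ ∫ t in Set.uIoc 0 x, |P t| := by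
      simpa [Real.norm_eq_abs] using
        intervalIntegral.norm_integral_le_integral_norm_uIoc (f := P) (a := 0) (b := x)
          (μ := volume)
    refine h1.trans (le_trans ?_ hP_L1)
    exact setIntegral_le_integral hP_int.abs (Eventually.of_forall fun t => abs_nonneg _)
  have hq_eq : ∀ x : ℝ, 0 ≤ x → q x = ∫ y in (0:ℝ)..x, h y := by
    intro x hx
    show (∫ t in (0:ℝ)..x, P t) = ∫ y in (0:ℝ)..x, h y
    rw [intervalIntegral.integral_of_le hx, intervalIntegral.integral_of_le hx]
    refine setIntegral_congr_fun measurableSet_Ioc fun t ht => ?_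
    have ht0 : (0:ℝ) ≤ t := ht.1.le
    rw [hPdef, Set.indicator_of_mem (mem_Ici.2 ht0), hp_eq t ht0]
  -- the candidate weak derivative of F(h)
  set g' : ℝ → ℝ := fun x => f x * q x + (P x) ^ 2 with hg'def
  have hg'_meas : Measurable g' := (hf_meas.mul hq_cont.measurable).add (hP_meas.pow_const 2)
  -- integrability of g'^2 * w with quantitative bound
  have hB2 : B ^ 2 = A * E := Real.sq_sqrt (mul_nonneg hA0 hE0)
  set D : ℝ → ℝ := fun x => 2 * M ^ 2 * (h' x ^ 2 * w x) + 2 * B ^ 4 * w x ^ (-(1/3):ℝ)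
    with hDdef
  have hD_int : IntegrableOn D (Set.Ici (0:ℝ)) :=
    (hE_int.const_mul _).add (hwint.const_mul _)
  have hg'w_bd : ∀ x ∈ Set.Ici (0:ℝ), g' x ^ 2 * w x ≤ D x := by
    intro x hx
    have hx0 : (0:ℝ) ≤ x := hx
    have hwx : 0 < w x := hwpos x hx0
    set u : ℝ := w x ^ (-(1/3):ℝ) with hu
    have hu0 : 0 ≤ u := Real.rpow_nonneg hwx.le _
    have hfx : f x = h' x := Set.indicator_of_mem (mem_Ici.2 hx0) h'
    have hPx : P x = p x := Set.indicator_of_mem (mem_Ici.2 hx0) p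
    have hq2 : q x ^ 2 ≤ M ^ 2 := by
      rw [← sq_abs]; exact pow_le_pow_left₀ (abs_nonneg _) (hq_bd x) 2
    have hp2 : p x ^ 2 ≤ (B * u) ^ 2 := by
      rw [← sq_abs]; exact pow_le_pow_left₀ (abs_nonneg _) (hp_bd x hx0) 2
    have hp4 : (p x ^ 2) ^ 2 ≤ B ^ 4 * u ^ 4 := by
      calc (p x ^ 2) ^ 2 ≤ ((B * u) ^ 2) ^ 2 :=
          pow_le_pow_left₀ (sq_nonneg _) hp2 2
        _ = B ^ 4 * u ^ 4 := by ring
    have hu4w : u ^ 4 * w x = u := by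
      rw [hu, ← Real.rpow_natCast (w x ^ (-(1/3):ℝ)) 4, ← Real.rpow_mul hwx.le,
        ← Real.rpow_add_one hwx.ne']
      norm_num
    have hsq2 : g' x ^ 2 ≤ 2 * (h' x * q x) ^ 2 + 2 * (p x ^ 2) ^ 2 := by
      have hg'x : g' x = h' x * q x + p x ^ 2 := by
        have e : g' x = f x * q x + P x ^ 2 := rfl
        rw [e, hfx, hPx]
      rw [hg'x]
      exact sq_add_le_two_sq _ _
    have hterm1 : (h' x * q x) ^ 2 * w x ≤ M ^ 2 * (h' x ^ 2 * w x) := by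
      have e : (h' x * q x) ^ 2 = h' x ^ 2 * q x ^ 2 := by ring
      have b1 : h' x ^ 2 * q x ^ 2 ≤ h' x ^ 2 * M ^ 2 :=
        mul_le_mul_of_nonneg_left hq2 (sq_nonneg _)
      calc (h' x * q x) ^ 2 * w x = h' x ^ 2 * q x ^ 2 * w x := by rw [e]
        _ ≤ h' x ^ 2 * M ^ 2 * w x := mul_le_mul_of_nonneg_right b1 hwx.le
        _ = M ^ 2 * (h' x ^ 2 * w x) := by ring
    have hterm2 : (p x ^ 2) ^ 2 * w x ≤ B ^ 4 * u := by
      calc (p x ^ 2) ^ 2 * w x ≤ B ^ 4 * u ^ 4 * w x :=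
          mul_le_mul_of_nonneg_right hp4 hwx.le
        _ = B ^ 4 * (u ^ 4 * w x) := by ring
        _ = B ^ 4 * u := by rw [hu4w]
    have expand : g' x ^ 2 * w x ≤ (2 * (h' x * q x) ^ 2 + 2 * (p x ^ 2) ^ 2) * w x :=
      mul_le_mul_of_nonneg_right hsq2 hwx.le
    calc g' x ^ 2 * w x ≤ (2 * (h' x * q x) ^ 2 + 2 * (p x ^ 2) ^ 2) * w x := expand
      _ = 2 * ((h' x * q x) ^ 2 * w x) + 2 * ((p x ^ 2) ^ 2 * w x) := by ring
      _ ≤ 2 * (M ^ 2 * (h' x ^ 2 * w x)) + 2 * (B ^ 4 * u) := by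
          have := mul_le_mul_of_nonneg_left hterm1 (by norm_num : (0:ℝ) ≤ 2)
          have := mul_le_mul_of_nonneg_left hterm2 (by norm_num : (0:ℝ) ≤ 2)
          linarith
      _ = D x := by rw [hDdef]; ring
  have hg'w_int : IntegrableOn (fun x => g' x ^ 2 * w x) (Set.Ici (0:ℝ)) := by
    refine hD_int.mono' ?_ ?_
    · exact (((hg'_meas.pow_const 2).aemeasurable.restrict).mul hwmeas).aestronglyMeasurable
    · filter_upwards [ae_restrict_mem measurableSet_Ici] with x hx
      rw [Real.norm_eq_abs, abs_of_nonneg (mul_nonneg (sq_nonneg _) (hwpos x hx).le)]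
      exact hg'w_bd x hx
  have hg'w_le : (∫ x in Set.Ici (0:ℝ), g' x ^ 2 * w x) ≤ 4 * A ^ 3 * E ^ 2 := by
    have step : (∫ x in Set.Ici (0:ℝ), g' x ^ 2 * w x) ≤ ∫ x in Set.Ici (0:ℝ), D x :=
      setIntegral_mono_on hg'w_int hD_int measurableSet_Ici hg'w_bd
    have calcD : (∫ x in Set.Ici (0:ℝ), D x) = 2 * M ^ 2 * E + 2 * B ^ 4 * A := by
      rw [hDdef, integral_add (hE_int.const_mul _) (hwint.const_mul _),
        integral_const_mul, integral_const_mul]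
    have hM2 : M ^ 2 = A ^ 2 * (A * E) := by rw [hMdef]; rw [mul_pow, hB2]; ring
    have hB4 : B ^ 4 = (A * E) ^ 2 := by
      have : B ^ 4 = (B ^ 2) ^ 2 := by ring
      rw [this, hB2]
    have : (∫ x in Set.Ici (0:ℝ), D x) = 4 * A ^ 3 * E ^ 2 := by
      rw [calcD, hM2, hB4]; ring
    linarith [step, this]
  -- global bound for P
  have hP_bdg : ∀ t : ℝ, |P t| ≤ B := by
    intro t
    by_cases ht : t ∈ Set.Ici (0:ℝ)
    · rw [hPdef, Set.indicator_of_mem ht]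
      refine (hp_bd t ht).trans ?_
      calc B * w t ^ (-(1/3):ℝ) ≤ B * 1 :=
          mul_le_mul_of_nonneg_left
            (Real.rpow_le_one_of_one_le_of_nonpos (hw1 t ht) (by norm_num)) hB0
        _ = B := mul_one B
    · rw [hPdef, Set.indicator_of_notMem ht, abs_zero]; exact hB0
  -- the fundamental theorem of calculus identity for g' (via Fubini)
  have hFTC : ∀ x : ℝ, 0 ≤ x → (∫ t in (0:ℝ)..x, g' t) = p x * q x := by
    intro x hx
    have hfq_int : Integrable (fun t => f t * q t) := by
      have h1 : Integrable (fun t => q t * f t) :=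
        hf_int.bdd_mul hq_cont.aestronglyMeasurable
          (c := M) (Eventually.of_forall fun t => by simpa [Real.norm_eq_abs] using hq_bd t)
      exact h1.congr (Eventually.of_forall fun t => mul_comm _ _)
    have hP2_int : Integrable (fun t => P t ^ 2) (volume.restrict (Set.Ioc (0:ℝ) x)) := by
      refine Integrable.mono' (g := fun _ => B ^ 2)
        (integrableOn_const (hs := measure_Ioc_lt_top.ne)) ?_ ?_
      · exact (hP_meas.pow_const 2).aestronglyMeasurable.restrict
      · refine Eventually.of_forall fun t => ?_
        rw [Real.norm_eq_abs, abs_of_nonneg (sq_nonneg _), ← sq_abs]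
        exact pow_le_pow_left₀ (abs_nonneg _) (hP_bdg t) 2
    -- the Fubini kernel
    set Φ : ℝ → ℝ → ℝ := fun t s =>
      (Set.Ioc (0:ℝ) x).indicator f t *
        ((Set.Ioi (0:ℝ)).indicator P s * (if s ≤ t then (1:ℝ) else 0)) with hΦdef
    have hΦmeas : Measurable (Function.uncurry Φ) := by
      have m1 : Measurable fun z : ℝ × ℝ => (Set.Ioc (0:ℝ) x).indicator f z.1 :=
        (hf_meas.indicator measurableSet_Ioc).comp measurable_fst
      have m2 : Measurable fun z : ℝ × ℝ => (Set.Ioi (0:ℝ)).indicator P z.2 :=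
        (hP_meas.indicator measurableSet_Ioi).comp measurable_snd
      have m3 : Measurable fun z : ℝ × ℝ => if z.2 ≤ z.1 then (1:ℝ) else 0 :=
        Measurable.ite (measurableSet_le measurable_snd measurable_fst)
          measurable_const measurable_const
      exact m1.mul (m2.mul m3)
    have hΦint : Integrable (Function.uncurry Φ) (volume.prod volume) := by
      have hG : Integrable
          (fun z : ℝ × ℝ => |(Set.Ioc (0:ℝ) x).indicator f z.1| *
            |(Set.Ioi (0:ℝ)).indicator P z.2|) (volume.prod volume) :=
        (hf_int.indicator measurableSet_Ioc).abs.mul_prod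
          (hP_int.indicator measurableSet_Ioi).abs
      refine hG.mono' hΦmeas.aestronglyMeasurable ?_
      refine Eventually.of_forall fun z => ?_
      have e : Function.uncurry Φ z = (Set.Ioc (0:ℝ) x).indicator f z.1 *
          ((Set.Ioi (0:ℝ)).indicator P z.2 * (if z.2 ≤ z.1 then (1:ℝ) else 0)) := rfl
      rw [Real.norm_eq_abs, e]
      by_cases hcz : z.2 ≤ z.1
      · rw [if_pos hcz, mul_one, abs_mul]
      · rw [if_neg hcz, mul_zero, mul_zero, abs_zero]
        positivity
    have hswap := integral_integral_swap hΦint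
    -- left-hand side of the swap
    have hLHS : ∀ t : ℝ, (∫ s, Φ t s) =
        (Set.Ioc (0:ℝ) x).indicator (fun r => f r * q r) t := by
      intro t
      have inner_eq : ∀ s : ℝ, (Set.Ioi (0:ℝ)).indicator P s * (if s ≤ t then (1:ℝ) else 0)
          = (Set.Ioc (0:ℝ) t).indicator P s := by
        intro s
        by_cases h1 : s ∈ Set.Ioi (0:ℝ)
        · by_cases h2 : s ≤ t
          · rw [Set.indicator_of_mem h1, if_pos h2, mul_one,
              Set.indicator_of_mem (Set.mem_Ioc.2 ⟨Set.mem_Ioi.1 h1, h2⟩)]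
          · rw [if_neg h2, mul_zero,
              Set.indicator_of_notMem (fun hc => h2 (Set.mem_Ioc.1 hc).2)]
        · rw [Set.indicator_of_notMem h1, zero_mul,
            Set.indicator_of_notMem (fun hc => h1 (Set.mem_Ioi.2 (Set.mem_Ioc.1 hc).1))]
      have e1 : (∫ s, Φ t s) =
          (Set.Ioc (0:ℝ) x).indicator f t * ∫ s in Set.Ioc (0:ℝ) t, P s := by
        have e0 : (fun s => Φ t s) = fun s => (Set.Ioc (0:ℝ) x).indicator f t *
            (Set.Ioc (0:ℝ) t).indicator P s := by
          funext s
          exact congrArg ((Set.Ioc (0:ℝ) x).indicator f t * ·) (inner_eq s)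
        rw [e0, integral_const_mul, integral_indicator measurableSet_Ioc]
      by_cases ht : t ∈ Set.Ioc (0:ℝ) x
      · have hqt : (∫ s in Set.Ioc (0:ℝ) t, P s) = q t :=
          (intervalIntegral.integral_of_le ht.1.le).symm
        rw [e1, hqt, Set.indicator_of_mem ht, Set.indicator_of_mem ht]
      · rw [e1, Set.indicator_of_notMem ht, Set.indicator_of_notMem ht, zero_mul]
    -- right-hand side of the swap
    have hRHS : ∀ s : ℝ, (∫ t, Φ t s) =
        (Set.Ioc (0:ℝ) x).indicator (fun r => p r * (p x - p r)) s := by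
      intro s
      have inner2 : ∀ t : ℝ, (Set.Ioc (0:ℝ) x).indicator f t * (if s ≤ t then (1:ℝ) else 0)
          = ((Set.Ioc (0:ℝ) x) ∩ Set.Ici s).indicator f t := by
        intro t
        by_cases h1 : t ∈ Set.Ioc (0:ℝ) x
        · by_cases h2 : s ≤ t
          · rw [Set.indicator_of_mem h1, if_pos h2, mul_one,
              Set.indicator_of_mem (Set.mem_inter h1 (Set.mem_Ici.2 h2))]
          · rw [if_neg h2, mul_zero,
              Set.indicator_of_notMem (fun hc => h2 (Set.mem_Ici.1 hc.2))]
        · rw [Set.indicator_of_notMem h1, zero_mul,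
            Set.indicator_of_notMem (fun hc => h1 hc.1)]
      have e2 : (∫ t, Φ t s) = (Set.Ioi (0:ℝ)).indicator P s *
          ∫ t in (Set.Ioc (0:ℝ) x) ∩ Set.Ici s, f t := by
        have e0 : (fun t => Φ t s) = fun t => (Set.Ioi (0:ℝ)).indicator P s *
            ((Set.Ioc (0:ℝ) x) ∩ Set.Ici s).indicator f t := by
          funext t
          have eb : Φ t s = (Set.Ioc (0:ℝ) x).indicator f t *
              ((Set.Ioi (0:ℝ)).indicator P s * (if s ≤ t then (1:ℝ) else 0)) := rfl
          rw [eb, ← inner2 t]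
          ring
        rw [e0, integral_const_mul, integral_indicator (measurableSet_Ioc.inter measurableSet_Ici)]
      by_cases hs : s ∈ Set.Ioc (0:ℝ) x
      · have hs0 : (0:ℝ) ≤ s := hs.1.le
        have hsx : s ≤ x := hs.2
        have hinter : (Set.Ioc (0:ℝ) x) ∩ Set.Ici s = Set.Icc s x := by
          ext t
          simp only [Set.mem_inter_iff, Set.mem_Ioc, Set.mem_Ici, Set.mem_Icc]
          constructor
          · rintro ⟨⟨_, h2⟩, h3⟩; exact ⟨h3, h2⟩
          · rintro ⟨h1, h2⟩; exact ⟨⟨lt_of_lt_of_le hs.1 h1, h2⟩, h1⟩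
        have hint_eq : (∫ t in (Set.Ioc (0:ℝ) x) ∩ Set.Ici s, f t) = p x - p s := by
          rw [hinter, integral_Icc_eq_integral_Ioc,
            ← intervalIntegral.integral_of_le hsx,
            ← intervalIntegral.integral_interval_sub_left (hf_ii 0 x) (hf_ii 0 s)]
          show (∫ t in (0:ℝ)..x, f t) - (∫ t in (0:ℝ)..s, f t)
              = (h 0 + ∫ t in (0:ℝ)..x, f t) - (h 0 + ∫ t in (0:ℝ)..s, f t)
          ring
        rw [e2, hint_eq, Set.indicator_of_mem hs,
          Set.indicator_of_mem (Set.mem_Ioi.2 hs.1), hPdef,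
          Set.indicator_of_mem (Set.mem_Ici.2 hs0)]
      · rw [Set.indicator_of_notMem hs, e2]
        by_cases hs0 : s ∈ Set.Ioi (0:ℝ)
        · have hxs : x < s := by
            by_contra hxs
            exact hs ⟨Set.mem_Ioi.1 hs0, not_lt.1 hxs⟩
          have hempty : (Set.Ioc (0:ℝ) x) ∩ Set.Ici s = ∅ := by
            ext t
            simp only [Set.mem_inter_iff, Set.mem_Ioc, Set.mem_Ici,
              Set.mem_empty_iff_false, iff_false, not_and]
            rintro ⟨_, h2⟩ h3
            linarith
          rw [hempty, setIntegral_empty, mul_zero]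
        · rw [Set.indicator_of_notMem hs0, zero_mul]
    -- assemble
    have hq_eqIoc : q x = ∫ t in Set.Ioc (0:ℝ) x, p t := by
      show (∫ t in (0:ℝ)..x, P t) = _
      rw [intervalIntegral.integral_of_le hx]
      refine setIntegral_congr_fun measurableSet_Ioc fun t ht => ?_
      exact Set.indicator_of_mem (Set.mem_Ici.2 ht.1.le) p
    have hp_intIoc : IntegrableOn p (Set.Ioc (0:ℝ) x) := hp_cont.integrableOn_Ioc
    have hp2_intIoc : IntegrableOn (fun t => p t ^ 2) (Set.Ioc (0:ℝ) x) :=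
      (hp_cont.pow 2).integrableOn_Ioc
    have hPp2 : (∫ t in Set.Ioc (0:ℝ) x, P t ^ 2) = ∫ t in Set.Ioc (0:ℝ) x, p t ^ 2 :=
      setIntegral_congr_fun measurableSet_Ioc fun t ht => by
        rw [hPdef, Set.indicator_of_mem (Set.mem_Ici.2 ht.1.le)]
    have hside1 : (∫ t, ∫ s, Φ t s) = ∫ t in Set.Ioc (0:ℝ) x, f t * q t := by
      rw [integral_congr_ae (ae_of_all _ hLHS), integral_indicator measurableSet_Ioc]
    have hside2 : (∫ s, ∫ t, Φ t s) = p x * q x - ∫ t in Set.Ioc (0:ℝ) x, p t ^ 2 := by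
      rw [integral_congr_ae (ae_of_all _ hRHS), integral_indicator measurableSet_Ioc]
      have e : (∫ s in Set.Ioc (0:ℝ) x, p s * (p x - p s))
          = ∫ s in Set.Ioc (0:ℝ) x, (p x * p s - p s ^ 2) :=
        setIntegral_congr_fun measurableSet_Ioc fun s _ => by ring
      rw [e, integral_sub (hp_intIoc.const_mul _) hp2_intIoc, integral_const_mul, ← hq_eqIoc]
    have hfq_eq : (∫ t in Set.Ioc (0:ℝ) x, f t * q t)
        = p x * q x - ∫ t in Set.Ioc (0:ℝ) x, p t ^ 2 := by
      rw [← hside1, hswap, hside2]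
    have hg'split : (∫ t in (0:ℝ)..x, g' t)
        = (∫ t in Set.Ioc (0:ℝ) x, f t * q t) + ∫ t in Set.Ioc (0:ℝ) x, P t ^ 2 := by
      rw [intervalIntegral.integral_of_le hx]
      have e : ∀ t, g' t = f t * q t + P t ^ 2 := fun t => rfl
      rw [integral_congr_ae (ae_of_all _ e)]
      exact integral_add hfq_int.restrict hP2_int
    rw [hg'split, hfq_eq, hPp2]
    ring
  -- conclusion
  refine ⟨g', ⟨hg'_meas, hg'w_int, ?_⟩, ?_⟩
  · intro x hx
    have hF0 : Fop h 0 = 0 := by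
      show h 0 * ∫ y in (0:ℝ)..(0:ℝ), h y = 0
      rw [intervalIntegral.integral_same, mul_zero]
    rw [hF0, zero_add, hFTC x hx]
    show h x * (∫ y in (0:ℝ)..x, h y) = p x * q x
    rw [hp_eq x hx, hq_eq x hx]
  · have hN0 : (0:ℝ) ≤ h 0 ^ 2 + E := add_nonneg (sq_nonneg _) hE0
    have hnorm2 : normW w h h' ^ 2 = h 0 ^ 2 + E := by
      show Real.sqrt (h 0 ^ 2 + ∫ x in Set.Ici (0:ℝ), h' x ^ 2 * w x) ^ 2 = _
      rw [Real.sq_sqrt hN0]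
    have hF0 : Fop h 0 = 0 := by
      show h 0 * ∫ y in (0:ℝ)..(0:ℝ), h y = 0
      rw [intervalIntegral.integral_same, mul_zero]
    have hnw : normW w (Fop h) g'
        = Real.sqrt (∫ x in Set.Ici (0:ℝ), g' x ^ 2 * w x) := by
      show Real.sqrt (Fop h 0 ^ 2 + ∫ x in Set.Ici (0:ℝ), g' x ^ 2 * w x) = _
      rw [hF0]
      norm_num
    rw [hnw, hnorm2]
    exact final_sqrt_bound (Real.sqrt A) E (h 0 ^ 2 + E) _
      (Real.sqrt_nonneg A) hE0 (le_add_of_nonneg_left (sq_nonneg (h 0)))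
      (by rw [hsA]; exact hg'w_le)
end

section
/- There exists a constant M > 0, depending only on w, such that for every t ≥ 0 and every h ∈ H_w the left-shift S(t)h, defined by (S(t)h)(x) := h(t + x), belongs to H_w and satisfies ‖S(t)h‖_w ≤ M‖h‖_w. -/
open MeasureTheory Set Filter

private lemma indicator_shift (f : ℝ → ℝ) (t : ℝ) :
    (fun x => (Ici t).indicator f (t + x)) = (Ici (0:ℝ)).indicator (fun x => f (t + x)) := by
  funext x
  by_cases hx : (0:ℝ) ≤ x
  · rw [indicator_of_mem (by simpa using hx),
      indicator_of_mem (by simp [mem_Ici, le_add_iff_nonneg_right, hx])]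
  · rw [indicator_of_notMem (by simpa using hx),
      indicator_of_notMem (by simp [mem_Ici, le_add_iff_nonneg_right, hx])]

private lemma shift_integrableOn {f : ℝ → ℝ} {t : ℝ} (hf : IntegrableOn f (Ici t)) :
    IntegrableOn (fun x => f (t + x)) (Ici (0:ℝ)) := by
  have h1 := ((integrable_indicator_iff (measurableSet_Ici (a := t))).2 hf).comp_add_left t
  rw [indicator_shift] at h1
  exact (integrable_indicator_iff measurableSet_Ici).1 h1

private lemma shift_integral (f : ℝ → ℝ) (t : ℝ) :
    ∫ x in Ici (0:ℝ), f (t + x) = ∫ x in Ici t, f x := by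
  rw [← integral_indicator measurableSet_Ici, ← integral_indicator measurableSet_Ici,
    ← integral_add_left_eq_self ((Ici t).indicator f) t, indicator_shift]

private lemma amgm (c d l : ℝ) (hc : 1 ≤ c) (hl : 0 < l) :
    |d| ≤ (l * (d ^ 2 * c) + (c)⁻¹ / l) / 2 := by
  have hc0 : (0:ℝ) < c := lt_of_lt_of_le one_pos hc
  have h1 : c * c⁻¹ = 1 := mul_inv_cancel₀ hc0.ne'
  have h2 : l * l⁻¹ = 1 := mul_inv_cancel₀ hl.ne'
  have h3 : (0:ℝ) ≤ (l * c * |d| - 1) ^ 2 := sq_nonneg _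
  have h4 : |d| ^ 2 = d ^ 2 := sq_abs d
  have h5 : (0:ℝ) ≤ |d| := abs_nonneg d
  have h6 : (0:ℝ) < c⁻¹ := inv_pos.2 hc0
  have h7 : (0:ℝ) < l⁻¹ := inv_pos.2 hl
  have h8 : c⁻¹ * l⁻¹ * (l * c) = 1 := by field_simp
  rw [div_eq_mul_inv (c)⁻¹ l]
  have h9 : 2 * |d| ≤ l * (d ^ 2 * c) + c⁻¹ * l⁻¹ := by
    rw [← h4]
    nlinarith [mul_pos hl hc0, sq_nonneg (l * c * |d| - 1), h8, h5]
  linarith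

set_option maxHeartbeats 1600000 in
/-- the left-shift semigroup is uniformly bounded on `H_w`. -/
theorem stmt12 (w : ℝ → ℝ) (hw : GoodWeight w) :
    ∃ M > (0:ℝ), ∀ t : ℝ, 0 ≤ t → ∀ h h' : ℝ → ℝ, IsHw w h h' →
      IsHw w (fun x => h (t + x)) (fun x => h' (t + x)) ∧
      normW w (fun x => h (t + x)) (fun x => h' (t + x)) ≤ M * normW w h h' := by
  obtain ⟨hw1, hw2, hw3, hw4⟩ := hw
  have hwc : ContinuousOn w (Ici 0) := hw3.continuousOn
  have hwm : AEMeasurable w (volume.restrict (Ici (0:ℝ))) :=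
    (hwc.aemeasurable measurableSet_Ici)
  set B : ℝ := ∫ x in Ici (0:ℝ), (w x)⁻¹ with hBdef
  have hBint : IntegrableOn (fun x => (w x)⁻¹) (Ici (0:ℝ)) := by
    apply Integrable.mono' hw4 hwm.inv.aestronglyMeasurable
    filter_upwards [ae_restrict_mem measurableSet_Ici] with x hx
    have h1 : (1:ℝ) ≤ w x := hw1 x hx
    have h0 : (0:ℝ) < w x := lt_of_lt_of_le one_pos h1
    rw [Real.norm_eq_abs, abs_of_nonneg (show (0:ℝ) ≤ w⁻¹ x from inv_nonneg.2 h0.le)]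
    calc (w x)⁻¹ = (w x) ^ (-1 : ℝ) := (Real.rpow_neg_one _).symm
      _ ≤ (w x) ^ (-(1/3) : ℝ) := Real.rpow_le_rpow_of_exponent_le h1 (by norm_num)
  have hB0 : 0 ≤ B := setIntegral_nonneg measurableSet_Ici (fun x hx => by
    have := hw1 x hx; positivity)
  refine ⟨Real.sqrt (2 * B + 3), Real.sqrt_pos.2 (by linarith), ?_⟩
  intro t ht h h' hh
  obtain ⟨hm, hint, hrep⟩ := hh
  set A : ℝ := ∫ x in Ici (0:ℝ), (h' x) ^ 2 * w x with hAdef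
  have hA0 : 0 ≤ A := setIntegral_nonneg measurableSet_Ici (fun x hx => by
    have := hw1 x hx; positivity)
  -- local integrability of h'
  have hii : ∀ a : ℝ, 0 ≤ a → IntegrableOn h' (Ioc 0 a) := by
    intro a ha
    have hconst : IntegrableOn (fun _ : ℝ => (1:ℝ)) (Ioc 0 a) :=
      integrableOn_const measure_Ioc_lt_top.ne
    have hsub : Ioc (0:ℝ) a ⊆ Ici 0 := fun x hx => le_of_lt hx.1
    have hdom : IntegrableOn (fun x => (1 + (h' x) ^ 2 * w x) / 2) (Ioc 0 a) :=
      (hconst.add (hint.mono_set hsub)).div_const 2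
    apply Integrable.mono' hdom hm.aestronglyMeasurable
    filter_upwards [ae_restrict_mem measurableSet_Ioc] with x hx
    have h1 : (1:ℝ) ≤ w x := hw1 x hx.1.le
    have h2 : (0:ℝ) ≤ (|h' x| - 1) ^ 2 := sq_nonneg _
    have h3 : |h' x| ^ 2 = h' x ^ 2 := sq_abs _
    rw [Real.norm_eq_abs]
    nlinarith [sq_nonneg (h' x), abs_nonneg (h' x)]
  have hiiI : ∀ a b : ℝ, 0 ≤ a → a ≤ b → IntervalIntegrable h' volume a b := by
    intro a b ha hab
    rw [intervalIntegrable_iff_integrableOn_Ioc_of_le hab]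
    exact (hii b (ha.trans hab)).mono_set (Ioc_subset_Ioc_left ha)
  -- representation for the shift
  have hrep' : ∀ x, 0 ≤ x → h (t + x) = h t + ∫ y in (0:ℝ)..x, h' (t + y) := by
    intro x hx
    have e1 : (∫ y in (0:ℝ)..x, h' (t + y)) = ∫ y in t..(t + x), h' y := by
      simpa using intervalIntegral.integral_comp_add_left (a := 0) (b := x) h' t
    have i1 : IntervalIntegrable h' volume 0 t := hiiI 0 t le_rfl ht
    have i2 : IntervalIntegrable h' volume t (t + x) := hiiI t (t + x) ht (by linarith)
    have e2 := intervalIntegral.integral_add_adjacent_intervals i1 i2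
    rw [hrep (t + x) (by linarith), hrep t ht, e1]
    linarith [e2]
  -- integrability of the shifted integrand
  have hG : IntegrableOn (fun x => (h' (t + x)) ^ 2 * w (t + x)) (Ici (0:ℝ)) :=
    shift_integrableOn (hint.mono_set (Ici_subset_Ici.2 ht))
  have hmshift : Measurable fun x => h' (t + x) := hm.comp (measurable_const_add t)
  have hIshift : IntegrableOn (fun x => (h' (t + x)) ^ 2 * w x) (Ici (0:ℝ)) := by
    apply Integrable.mono' hG
      (((hmshift.pow_const 2).aemeasurable.mul hwm).aestronglyMeasurable)
    filter_upwards [ae_restrict_mem measurableSet_Ici] with x hx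
    have hx0 : (0:ℝ) ≤ x := hx
    have h1 : (1:ℝ) ≤ w x := hw1 x hx0
    have h2 : w x ≤ w (t + x) := hw2 hx (by simp only [mem_Ici]; linarith) (by linarith)
    rw [Real.norm_eq_abs, abs_of_nonneg (show (0:ℝ) ≤ ((fun x => h' (t + x) ^ 2) * w) x from
      mul_nonneg (sq_nonneg _) (by linarith : (0:ℝ) ≤ w x))]
    exact mul_le_mul_of_nonneg_left h2 (sq_nonneg _)
  -- the shifted integral is bounded by A
  have hshift_le : (∫ x in Ici (0:ℝ), (h' (t + x)) ^ 2 * w x) ≤ A := by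
    calc (∫ x in Ici (0:ℝ), (h' (t + x)) ^ 2 * w x)
        ≤ ∫ x in Ici (0:ℝ), (h' (t + x)) ^ 2 * w (t + x) := by
          apply setIntegral_mono_on hIshift hG measurableSet_Ici
          intro x hx
          have hx0 : (0:ℝ) ≤ x := hx
          have h2 : w x ≤ w (t + x) := hw2 hx (by simp only [mem_Ici]; linarith) (by linarith)
          exact mul_le_mul_of_nonneg_left h2 (sq_nonneg _)
      _ = ∫ x in Ici t, (h' x) ^ 2 * w x := shift_integral (fun x => (h' x) ^ 2 * w x) t
      _ ≤ A := by
          apply setIntegral_mono_set hint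
          · filter_upwards [ae_restrict_mem measurableSet_Ici] with x hx
            have := hw1 x hx; positivity
          · exact (Ici_subset_Ici.2 ht).eventuallyLE
  -- Cauchy–Schwarz type bound
  have key : ∀ l : ℝ, 0 < l →
      (∫ x in Ioc (0:ℝ) t, |h' x|) ≤ (l * A + B / l) / 2 := by
    intro l hl
    have hgint : IntegrableOn (fun x => (l * ((h' x) ^ 2 * w x) + (w x)⁻¹ / l) / 2)
        (Ici (0:ℝ)) := ((hint.const_mul l).add (hBint.div_const l)).div_const 2
    calc (∫ x in Ioc (0:ℝ) t, |h' x|)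
        ≤ ∫ x in Ioc (0:ℝ) t, (l * ((h' x) ^ 2 * w x) + (w x)⁻¹ / l) / 2 := by
          apply integral_mono_ae (hii t ht).abs (hgint.mono_set (fun x hx => le_of_lt hx.1))
          filter_upwards [ae_restrict_mem measurableSet_Ioc] with x hx
          exact amgm (w x) (h' x) l (hw1 x hx.1.le) hl
      _ ≤ ∫ x in Ici (0:ℝ), (l * ((h' x) ^ 2 * w x) + (w x)⁻¹ / l) / 2 := by
          apply setIntegral_mono_set hgint
          · filter_upwards [ae_restrict_mem measurableSet_Ici] with x hx
            have h1 := hw1 x hx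
            have h0 : (0:ℝ) < w x := lt_of_lt_of_le one_pos h1
            positivity
          · exact (HasSubset.Subset.eventuallyLE (fun x hx => le_of_lt hx.1))
      _ = (l * A + B / l) / 2 := by
          rw [integral_div, integral_add (hint.const_mul l) (hBint.div_const l),
            integral_const_mul, integral_div]
  have hCS : |∫ y in (0:ℝ)..t, h' y| ≤ Real.sqrt ((B + 1) * A) := by
    have habs : |∫ y in (0:ℝ)..t, h' y| ≤ ∫ x in Ioc (0:ℝ) t, |h' x| := by
      rw [intervalIntegral.integral_of_le ht]
      simpa [Real.norm_eq_abs] using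
        norm_integral_le_integral_norm (μ := volume.restrict (Ioc (0:ℝ) t)) h'
    have hJ0 : 0 ≤ ∫ x in Ioc (0:ℝ) t, |h' x| :=
      setIntegral_nonneg measurableSet_Ioc (fun x _ => abs_nonneg _)
    rcases eq_or_lt_of_le hA0 with hA' | hA'
    · -- A = 0
      set J := ∫ x in Ioc (0:ℝ) t, |h' x| with hJ
      have hJle : J ≤ 0 := by
        by_contra hJ'
        push_neg at hJ'
        have h1 := key (B / (2 * J) + 1) (by positivity)
        rw [← hA'] at h1
        have h2 : (0:ℝ) < B / (2 * J) + 1 := by positivity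
        rw [mul_zero, zero_add] at h1
        have h4 : B / (2 * J) * (2 * J) = B := div_mul_cancel₀ B (by positivity)
        rw [div_div, le_div_iff₀ (by positivity)] at h1
        nlinarith
      have : J = 0 := le_antisymm hJle hJ0
      rw [this] at habs
      exact habs.trans (Real.sqrt_nonneg _)
    · -- A > 0
      set sa := Real.sqrt A with hsa
      set sb := Real.sqrt (B + 1) with hsb
      have hsa0 : 0 < sa := Real.sqrt_pos.2 hA'
      have hsb0 : 0 < sb := Real.sqrt_pos.2 (by linarith)
      have hsa2 : sa ^ 2 = A := Real.sq_sqrt hA0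
      have hsb2 : sb ^ 2 = B + 1 := Real.sq_sqrt (by linarith)
      have hl : (0:ℝ) < sb / sa := by positivity
      have h1 := key (sb / sa) hl
      have hmul : Real.sqrt ((B + 1) * A) = sb * sa :=
        Real.sqrt_mul (by linarith) A
      refine habs.trans (h1.trans ?_)
      rw [hmul]
      rw [div_le_iff₀ (by norm_num : (0:ℝ) < 2)]
      have e1 : sb / sa * A = sb * sa := by
        field_simp
        nlinarith
      have e2 : B / (sb / sa) = B * sa / sb := by
        field_simp
      rw [e1, e2]
      have h5 : B * sa / sb ≤ sb * sa := by
        rw [div_le_iff₀ hsb0]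
        nlinarith [hsb2, hsa0.le]
      linarith
  clear_value A B
  -- bound on |h t|
  have hht2 : (h t) ^ 2 ≤ 2 * (h 0) ^ 2 + 2 * ((B + 1) * A) := by
    have h1 : |h t| ≤ |h 0| + Real.sqrt ((B + 1) * A) := by
      rw [hrep t ht]
      exact (abs_add_le _ _).trans (add_le_add le_rfl hCS)
    have h2 : (h t) ^ 2 ≤ (|h 0| + Real.sqrt ((B + 1) * A)) ^ 2 := by
      rw [← sq_abs (h t)]
      exact pow_le_pow_left₀ (abs_nonneg _) h1 2
    have h3 : Real.sqrt ((B + 1) * A) ^ 2 = (B + 1) * A :=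
      Real.sq_sqrt (mul_nonneg (by linarith) hA0)
    have h5 : 2 * |h 0| * Real.sqrt ((B + 1) * A) ≤ |h 0| ^ 2 + Real.sqrt ((B + 1) * A) ^ 2 :=
      two_mul_le_add_sq _ _
    have h6 : |h 0| ^ 2 = (h 0) ^ 2 := sq_abs _
    have h7 : (|h 0| + Real.sqrt ((B + 1) * A)) ^ 2
        = |h 0| ^ 2 + 2 * |h 0| * Real.sqrt ((B + 1) * A) + Real.sqrt ((B + 1) * A) ^ 2 := by
      ring
    linarith
  constructor
  · refine ⟨hmshift, hIshift, ?_⟩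
    intro x hx
    simpa using hrep' x hx
  · -- norm bound
    unfold normW
    have e0 : (fun x => h (t + x)) 0 = h t := by simp
    rw [e0]
    have hin : (h t) ^ 2 + (∫ x in Ici (0:ℝ), (h' (t + x)) ^ 2 * w x)
        ≤ (2 * B + 3) * ((h 0) ^ 2 + A) := by
      have h8 : 0 ≤ B * (h 0) ^ 2 := mul_nonneg hB0 (sq_nonneg _)
      have h9 : (2 * B + 3) * ((h 0) ^ 2 + A)
          = 2 * B * (h 0) ^ 2 + 3 * (h 0) ^ 2 + 2 * (B * A) + 3 * A := by ring
      have h10 : 2 * ((B + 1) * A) = 2 * (B * A) + 2 * A := by ring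
      linarith [hshift_le, hht2, sq_nonneg (h 0)]
    calc Real.sqrt ((h t) ^ 2 + ∫ x in Ici (0:ℝ), (h' (t + x)) ^ 2 * w x)
        ≤ Real.sqrt ((2 * B + 3) * ((h 0) ^ 2 + A)) := Real.sqrt_le_sqrt hin
      _ = Real.sqrt (2 * B + 3) * Real.sqrt ((h 0) ^ 2 + A) :=
        Real.sqrt_mul (by linarith) _
      _ = Real.sqrt (2 * B + 3) *
          Real.sqrt ((h 0) ^ 2 + ∫ x in Ici (0:ℝ), (h' x) ^ 2 * w x) := by rw [hAdef]
end

section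
/- The left-shift semigroup is strongly continuous on H_w: for every h ∈ H_w one has ‖S(t)h − h‖_w → 0 as t → 0⁺, where (S(t)h)(x) := h(t + x). -/
open MeasureTheory Set Filter

set_option maxHeartbeats 1000000 in
/-- strong continuity of the left-shift semigroup on `H_w`. -/
theorem stmt13 (w : ℝ → ℝ) (hw : GoodWeight w) (h h' : ℝ → ℝ) (hh : IsHw w h h') :
    Filter.Tendsto
      (fun t => normW w (fun x => h (t + x) - h x) (fun x => h' (t + x) - h' x))
      (nhdsWithin 0 (Set.Ioi 0)) (nhds 0) := by
  obtain ⟨hw1, hwmono, hwcd, -⟩ := hw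
  obtain ⟨hm, hint, hrep⟩ := hh
  have hwcont : ContinuousOn w (Ici 0) := hwcd.continuousOn
  have hwpos : ∀ x : ℝ, 0 ≤ x → 0 ≤ w x := fun x hx => le_trans zero_le_one (hw1 x hx)
  have hsqrtw : ContinuousOn (fun x => Real.sqrt (w x)) (Ici (0:ℝ)) :=
    Real.continuous_sqrt.comp_continuousOn hwcont
  haveI : Fact ((1:ENNReal) ≤ 2) := ⟨one_le_two⟩
  -- the function f = 1_{Ici 0} · h'·√w ∈ L²(ℝ)
  set f : ℝ → ℝ := (Ici (0:ℝ)).indicator (fun x => h' x * Real.sqrt (w x)) with hf_def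
  have hsm : AEStronglyMeasurable f volume := by
    rw [hf_def, aestronglyMeasurable_indicator_iff measurableSet_Ici]
    exact (hm.aestronglyMeasurable.restrict).mul
      (hsqrtw.aestronglyMeasurable measurableSet_Ici)
  have hfsq : (fun x => f x ^ 2) = (Ici (0:ℝ)).indicator (fun x => h' x ^ 2 * w x) := by
    funext x
    by_cases hx : x ∈ Ici (0:ℝ)
    · simp only [hf_def, Set.indicator_of_mem hx, mul_pow, Real.sq_sqrt (hwpos x hx)]
    · simp [hf_def, Set.indicator_of_notMem hx]
  have hfL2 : MemLp f 2 volume := by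
    rw [memLp_two_iff_integrable_sq hsm, hfsq]
    exact hint.integrable_indicator measurableSet_Ici
  set F : Lp ℝ 2 (volume : Measure ℝ) := hfL2.toLp f with hF_def
  -- shift maps
  set cmap : C(ℝ × ℝ, ℝ) := ⟨fun p => p.1 + p.2, continuous_add⟩ with hcmap_def
  set S : ℝ → C(ℝ, ℝ) := fun t => cmap.curry t with hS_def
  have hSapp : ∀ t x : ℝ, S t x = t + x := fun t x => rfl
  have hScont : Continuous S := cmap.curry.continuous
  have mp : ∀ t : ℝ, MeasurePreserving (S t) volume volume := by
    intro t
    have : MeasurePreserving (fun x : ℝ => t + x) volume volume :=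
      measurePreserving_add_left volume t
    exact this
  set T : ℝ → Lp ℝ 2 (volume : Measure ℝ) :=
    fun t => Lp.compMeasurePreserving (S t) (mp t) F with hT_def
  have hT0 : T 0 = F := by
    apply Lp.ext
    filter_upwards [Lp.coeFn_compMeasurePreserving F (mp 0)] with x hx
    rw [hx]
    show (F : ℝ → ℝ) (0 + x) = F x
    rw [zero_add]
  have hTtend : Tendsto T (nhdsWithin 0 (Set.Ioi 0)) (nhds F) := by
    have := Filter.Tendsto.compMeasurePreservingLp
      (tendsto_const_nhds : Tendsto (fun _ : ℝ => F) (nhdsWithin 0 (Set.Ioi 0)) (nhds F))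
      ((hScont.tendsto 0).mono_left nhdsWithin_le_nhds) mp (mp 0)
      (by norm_num : (2:ENNReal) ≠ ⊤)
    have h0 : (Lp.compMeasurePreserving (⇑(S 0)) (mp 0)) F = F := hT0
    rwa [h0] at this
  have hnorm : Tendsto (fun t => ‖T t - F‖ ^ 2) (nhdsWithin 0 (Set.Ioi 0)) (nhds 0) := by
    have h1 : Tendsto (fun t => T t - F) (nhdsWithin 0 (Set.Ioi 0)) (nhds (F - F)) :=
      hTtend.sub tendsto_const_nhds
    rw [sub_self] at h1
    simpa using h1.norm.pow 2
  -- coeFn identifications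
  have hTcoe : ∀ t, (T t : ℝ → ℝ) =ᵐ[volume] fun x => f (t + x) := by
    intro t
    have h1 := Lp.coeFn_compMeasurePreserving F (mp t)
    have hFf : (F : ℝ → ℝ) =ᵐ[volume] f := hfL2.coeFn_toLp
    have h2 : ((F : ℝ → ℝ) ∘ (S t)) =ᵐ[volume] (f ∘ (S t)) :=
      (mp t).quasiMeasurePreserving.ae_eq_comp hFf
    filter_upwards [h1, h2] with x hx1 hx2
    rw [hx1, hx2]
    rfl
  have hLt : ∀ t, ((T t - F : Lp ℝ 2 volume) : ℝ → ℝ) =ᵐ[volume] fun x => f (t + x) - f x := by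
    intro t
    filter_upwards [Lp.coeFn_sub (T t) F, hTcoe t, hfL2.coeFn_toLp] with x hx h1 h2
    rw [hx]
    simp only [Pi.sub_apply, h1, hF_def, h2]
  have hsqint : ∀ t, Integrable (fun x => (f (t + x) - f x) ^ 2) volume := by
    intro t
    exact MemLp.integrable_sq (MemLp.ae_eq (hLt t) (Lp.memLp (T t - F)))
  have hA2 : ∀ t, (∫ x in Ici (0:ℝ), (f (t + x) - f x) ^ 2) ≤ ‖T t - F‖ ^ 2 := by
    intro t
    have h1 : (∫ x in Ici (0:ℝ), (f (t + x) - f x) ^ 2) ≤ ∫ x, (f (t + x) - f x) ^ 2 :=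
      setIntegral_le_integral (hsqint t) (Filter.Eventually.of_forall fun x => sq_nonneg _)
    have h2 : (∫ x, (f (t + x) - f x) ^ 2) = ‖T t - F‖ ^ 2 := by
      have h3 : (∫ x, (f (t + x) - f x) ^ 2)
          = ∫ x, ((T t - F : Lp ℝ 2 volume) x) * ((T t - F : Lp ℝ 2 volume) x) := by
        refine integral_congr_ae ?_
        filter_upwards [hLt t] with x hx
        rw [hx]; ring
      have h4 : (inner ℝ (T t - F) (T t - F) : ℝ)
          = ∫ x, ((T t - F : Lp ℝ 2 volume) x) * ((T t - F : Lp ℝ 2 volume) x) := by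
        rw [L2.inner_def]
        congr 1
      rw [h3, ← h4, real_inner_self_eq_norm_sq]
    linarith [h1, h2.le, h2.ge]
  -- the dominating integrable function q
  set q : ℝ → ℝ := (Ici (0:ℝ)).indicator (fun y => h' y ^ 2 * w y) with hq_def
  have hq : Integrable q volume := hint.integrable_indicator measurableSet_Ici
  -- translated error term
  set G : ℝ → ℝ → ℝ := fun t => (Ici t).indicator
    (fun y => h' y ^ 2 * (Real.sqrt (w y) - Real.sqrt (w (y - t))) ^ 2) with hG_def
  set B : ℝ → ℝ := fun t => ∫ y in Ici (0:ℝ), G t y with hB_def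
  -- B → 0 by dominated convergence
  have hB : Tendsto B (nhdsWithin 0 (Set.Ioi 0)) (nhds 0) := by
    have hmeas : ∀ᶠ t in nhdsWithin (0:ℝ) (Set.Ioi 0),
        AEStronglyMeasurable (G t) (volume.restrict (Ici 0)) := by
      filter_upwards [self_mem_nhdsWithin] with t ht
      have ht0 : (0:ℝ) ≤ t := le_of_lt ht
      rw [hG_def]
      rw [aestronglyMeasurable_indicator_iff measurableSet_Ici,
        Measure.restrict_restrict measurableSet_Ici, Set.Ici_inter_Ici,
        sup_eq_left.2 ht0]
      have c1 : AEStronglyMeasurable (fun y => h' y ^ 2) (volume.restrict (Ici t)) :=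
        ((hm.pow_const 2).aestronglyMeasurable).restrict
      have c2 : ContinuousOn (fun y => Real.sqrt (w y)) (Ici t) :=
        hsqrtw.mono (Set.Ici_subset_Ici.2 ht0)
      have c3 : ContinuousOn (fun y => Real.sqrt (w (y - t))) (Ici t) := by
        apply hsqrtw.comp ((continuous_id.sub continuous_const).continuousOn)
        intro y hy
        exact sub_nonneg.2 (Set.mem_Ici.mp hy)
      exact c1.mul (((c2.sub c3).pow 2).aestronglyMeasurable measurableSet_Ici)
    have hbound : ∀ᶠ t in nhdsWithin (0:ℝ) (Set.Ioi 0),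
        ∀ᵐ y ∂(volume.restrict (Ici (0:ℝ))), ‖G t y‖ ≤ h' y ^ 2 * w y := by
      filter_upwards [self_mem_nhdsWithin] with t ht
      have ht0 : (0:ℝ) ≤ t := le_of_lt ht
      rw [ae_restrict_iff' measurableSet_Ici]
      refine Filter.Eventually.of_forall fun y hy => ?_
      by_cases hyt : y ∈ Ici t
      · rw [hG_def]
        simp only [Set.indicator_of_mem hyt]
        rw [Real.norm_eq_abs, abs_of_nonneg (by positivity)]
        have h0yt : (0:ℝ) ≤ y - t := sub_nonneg.2 hyt
        have hmono : w (y - t) ≤ w y := hwmono h0yt hy (by linarith)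
        have h1 : Real.sqrt (w (y - t)) ≤ Real.sqrt (w y) := Real.sqrt_le_sqrt hmono
        have h2 : 0 ≤ Real.sqrt (w (y - t)) := Real.sqrt_nonneg _
        have h4 : Real.sqrt (w y) ^ 2 = w y := Real.sq_sqrt (hwpos y hy)
        have h3 : (Real.sqrt (w y) - Real.sqrt (w (y - t))) ^ 2 ≤ w y := by
          nlinarith [Real.sqrt_nonneg (w y)]
        nlinarith [sq_nonneg (h' y)]
      · rw [hG_def]
        simp only [Set.indicator_of_notMem hyt, norm_zero]
        have := hwpos y hy
        positivity
    have hlim : ∀ᵐ y ∂(volume.restrict (Ici (0:ℝ))),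
        Tendsto (fun t => G t y) (nhdsWithin 0 (Set.Ioi 0)) (nhds 0) := by
      have h2 : ∀ᵐ y ∂(volume.restrict (Ici (0:ℝ))), y ≠ 0 := by
        refine ae_iff.2 ?_
        have : {y : ℝ | ¬ y ≠ 0} = {0} := by ext y; simp
        rw [this, Measure.restrict_apply (measurableSet_singleton 0)]
        exact measure_mono_null Set.inter_subset_left (Real.volume_singleton)
      have h3 : ∀ᵐ y ∂(volume.restrict (Ici (0:ℝ))), y ∈ Ici (0:ℝ) :=
        ae_restrict_mem measurableSet_Ici
      filter_upwards [h2, h3] with y hy2 hy3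
      have hy : (0:ℝ) < y := lt_of_le_of_ne hy3 (Ne.symm hy2)
      have hcw : ContinuousWithinAt w (Ici 0) y := hwcont y (le_of_lt hy)
      have ht1 : Tendsto (fun t : ℝ => y - t) (nhdsWithin 0 (Set.Ioi 0))
          (nhdsWithin y (Ici 0)) := by
        apply tendsto_nhdsWithin_of_tendsto_nhds_of_eventually_within
        · have : Tendsto (fun t : ℝ => y - t) (nhds 0) (nhds (y - 0)) :=
            tendsto_const_nhds.sub tendsto_id
          rw [sub_zero] at this
          exact this.mono_left nhdsWithin_le_nhds
        · filter_upwards [Ioo_mem_nhdsGT_of_mem ⟨le_refl (0:ℝ), hy⟩] with t ht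
          exact sub_nonneg.2 (le_of_lt ht.2)
      have ht2 : Tendsto (fun t => Real.sqrt (w (y - t))) (nhdsWithin 0 (Set.Ioi 0))
          (nhds (Real.sqrt (w y))) :=
        (Real.continuous_sqrt.tendsto _).comp (hcw.tendsto.comp ht1)
      have ht3 : Tendsto (fun t => h' y ^ 2 * (Real.sqrt (w y) - Real.sqrt (w (y - t))) ^ 2)
          (nhdsWithin 0 (Set.Ioi 0))
          (nhds (h' y ^ 2 * (Real.sqrt (w y) - Real.sqrt (w y)) ^ 2)) :=
        tendsto_const_nhds.mul ((tendsto_const_nhds.sub ht2).pow 2)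
      rw [sub_self] at ht3
      simp only [ne_eq, OfNat.ofNat_ne_zero, not_false_eq_true, zero_pow, mul_zero] at ht3
      apply ht3.congr'
      filter_upwards [Ioo_mem_nhdsGT_of_mem ⟨le_refl (0:ℝ), hy⟩] with t ht
      rw [hG_def]
      exact (Set.indicator_of_mem (Set.mem_Ici.mpr (le_of_lt ht.2))
        (fun y => h' y ^ 2 * (Real.sqrt (w y) - Real.sqrt (w (y - t))) ^ 2)).symm
    have hDC : Tendsto (fun t => ∫ y in Ici (0:ℝ), G t y) (nhdsWithin (0:ℝ) (Set.Ioi 0))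
        (nhds (∫ _ in Ici (0:ℝ), (0:ℝ))) :=
      tendsto_integral_filter_of_dominated_convergence
        (fun y => h' y ^ 2 * w y) hmeas hbound hint hlim
    simpa using hDC
  -- the main inequality
  have hineq : ∀ᶠ t in nhdsWithin (0:ℝ) (Set.Ioi 0),
      (∫ x in Ici (0:ℝ), (h' (t + x) - h' x) ^ 2 * w x)
        ≤ 2 * ‖T t - F‖ ^ 2 + 2 * B t := by
    filter_upwards [self_mem_nhdsWithin] with t ht
    have ht0 : (0:ℝ) ≤ t := le_of_lt ht
    -- integrability of the error term
    have hq2 : Integrable (fun x => q (t + x)) volume := by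
      have := (mp t).integrable_comp hq.aestronglyMeasurable
      exact this.2 hq
    have herrmeas : AEStronglyMeasurable
        (fun x => h' (t + x) ^ 2 * (Real.sqrt (w (t + x)) - Real.sqrt (w x)) ^ 2)
        (volume.restrict (Ici (0:ℝ))) := by
      have c1 : Measurable (fun x : ℝ => h' (t + x) ^ 2) :=
        (hm.comp (measurable_const_add t)).pow_const 2
      have c2 : ContinuousOn (fun x => Real.sqrt (w (t + x))) (Ici (0:ℝ)) := by
        apply hsqrtw.comp ((continuous_const.add continuous_id).continuousOn)
        intro x hx
        exact add_nonneg ht0 hx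
      exact (c1.aestronglyMeasurable).restrict.mul
        (((c2.sub hsqrtw).pow 2).aestronglyMeasurable measurableSet_Ici)
    have herrint : IntegrableOn
        (fun x => h' (t + x) ^ 2 * (Real.sqrt (w (t + x)) - Real.sqrt (w x)) ^ 2)
        (Ici (0:ℝ)) volume := by
      apply Integrable.mono' hq2.integrableOn herrmeas
      rw [ae_restrict_iff' measurableSet_Ici]
      refine Filter.Eventually.of_forall fun x hx => ?_
      have htx : (0:ℝ) ≤ t + x := add_nonneg ht0 hx
      have hmono : w x ≤ w (t + x) := hwmono hx htx (le_add_of_nonneg_left ht0)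
      have h1 : Real.sqrt (w x) ≤ Real.sqrt (w (t + x)) := Real.sqrt_le_sqrt hmono
      have h2 : 0 ≤ Real.sqrt (w x) := Real.sqrt_nonneg _
      have h4 : Real.sqrt (w (t + x)) ^ 2 = w (t + x) := Real.sq_sqrt (hwpos _ htx)
      have h3 : (Real.sqrt (w (t + x)) - Real.sqrt (w x)) ^ 2 ≤ w (t + x) := by
        nlinarith [Real.sqrt_nonneg (w (t + x))]
      simp only [Real.norm_eq_abs, hq_def]
      rw [Set.indicator_of_mem (Set.mem_Ici.mpr htx), abs_of_nonneg (by positivity)]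
      nlinarith [sq_nonneg (h' (t + x))]
    have hrint : IntegrableOn
        (fun x => 2 * (f (t + x) - f x) ^ 2
          + 2 * (h' (t + x) ^ 2 * (Real.sqrt (w (t + x)) - Real.sqrt (w x)) ^ 2))
        (Ici (0:ℝ)) volume :=
      (((hsqint t).integrableOn).const_mul 2).add (herrint.const_mul 2)
    -- pointwise inequality
    have hptwise : (fun x => (h' (t + x) - h' x) ^ 2 * w x)
        ≤ᵐ[volume.restrict (Ici (0:ℝ))]
        (fun x => 2 * (f (t + x) - f x) ^ 2
          + 2 * (h' (t + x) ^ 2 * (Real.sqrt (w (t + x)) - Real.sqrt (w x)) ^ 2)) := by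
      filter_upwards [ae_restrict_mem measurableSet_Ici] with x hx
      have htx : (0:ℝ) ≤ t + x := add_nonneg ht0 hx
      have e1 : f x = h' x * Real.sqrt (w x) := Set.indicator_of_mem hx _
      have e2 : f (t + x) = h' (t + x) * Real.sqrt (w (t + x)) := Set.indicator_of_mem htx _
      have e3 : Real.sqrt (w x) ^ 2 = w x := Real.sq_sqrt (hwpos x hx)
      have e4 : Real.sqrt (w (t + x)) ^ 2 = w (t + x) := Real.sq_sqrt (hwpos _ htx)
      rw [e1, e2]
      nlinarith [sq_nonneg ((h' (t + x) * Real.sqrt (w (t + x)) - h' x * Real.sqrt (w x))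
        + h' (t + x) * (Real.sqrt (w (t + x)) - Real.sqrt (w x))),
        sq_nonneg (h' (t + x) - h' x), e3]
    have hnn : (0 : ℝ → ℝ) ≤ᵐ[volume.restrict (Ici (0:ℝ))]
        (fun x => (h' (t + x) - h' x) ^ 2 * w x) := by
      filter_upwards [ae_restrict_mem measurableSet_Ici] with x hx
      exact mul_nonneg (sq_nonneg _) (hwpos x hx)
    have hstep1 : (∫ x in Ici (0:ℝ), (h' (t + x) - h' x) ^ 2 * w x)
        ≤ ∫ x in Ici (0:ℝ), (2 * (f (t + x) - f x) ^ 2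
          + 2 * (h' (t + x) ^ 2 * (Real.sqrt (w (t + x)) - Real.sqrt (w x)) ^ 2)) :=
      integral_mono_of_nonneg hnn hrint hptwise
    -- change of variables for the error term
    have hchange : (∫ x in Ici (0:ℝ),
        h' (t + x) ^ 2 * (Real.sqrt (w (t + x)) - Real.sqrt (w x)) ^ 2) = B t := by
      have key : ∀ x : ℝ, (Ici (0:ℝ)).indicator
          (fun x => h' (t + x) ^ 2 * (Real.sqrt (w (t + x)) - Real.sqrt (w x)) ^ 2) x
          = G t (t + x) := by
        intro x
        by_cases hx : x ∈ Ici (0:ℝ)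
        · rw [Set.indicator_of_mem hx]
          simp only [hG_def]
          rw [Set.indicator_of_mem (Set.mem_Ici.mpr (le_add_of_nonneg_right (Set.mem_Ici.mp hx)))]
          simp [add_sub_cancel_left]
        · rw [Set.indicator_of_notMem hx]
          simp only [hG_def]
          rw [Set.indicator_of_notMem]
          intro hc
          have hc2 : t ≤ t + x := Set.mem_Ici.mp hc
          exact hx (Set.mem_Ici.mpr (by linarith))
      calc (∫ x in Ici (0:ℝ),
            h' (t + x) ^ 2 * (Real.sqrt (w (t + x)) - Real.sqrt (w x)) ^ 2)
          = ∫ x, (Ici (0:ℝ)).indicator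
            (fun x => h' (t + x) ^ 2 * (Real.sqrt (w (t + x)) - Real.sqrt (w x)) ^ 2) x :=
            (integral_indicator measurableSet_Ici).symm
        _ = ∫ x, G t (t + x) := by simp_rw [key]
        _ = ∫ y, G t y := integral_add_left_eq_self (G t) t
        _ = ∫ y in Ici t, (fun y => h' y ^ 2
            * (Real.sqrt (w y) - Real.sqrt (w (y - t))) ^ 2) y := by
            simp only [hG_def]; exact integral_indicator measurableSet_Ici
        _ = B t := by
            simp only [hB_def, hG_def]
            rw [setIntegral_indicator measurableSet_Ici, Set.Ici_inter_Ici,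
              sup_eq_right.2 ht0]
    have hsplit : (∫ x in Ici (0:ℝ), (2 * (f (t + x) - f x) ^ 2
          + 2 * (h' (t + x) ^ 2 * (Real.sqrt (w (t + x)) - Real.sqrt (w x)) ^ 2)))
        = 2 * (∫ x in Ici (0:ℝ), (f (t + x) - f x) ^ 2) + 2 * B t := by
      rw [integral_add (((hsqint t).integrableOn).const_mul 2) (herrint.const_mul 2),
        integral_const_mul, integral_const_mul, hchange]
    have := hA2 t
    calc (∫ x in Ici (0:ℝ), (h' (t + x) - h' x) ^ 2 * w x)
        ≤ 2 * (∫ x in Ici (0:ℝ), (f (t + x) - f x) ^ 2) + 2 * B t := by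
          rw [← hsplit]; exact hstep1
      _ ≤ 2 * ‖T t - F‖ ^ 2 + 2 * B t := by nlinarith
  -- part 2 : the integral term tends to 0
  have hpart2 : Tendsto (fun t => ∫ x in Ici (0:ℝ), (h' (t + x) - h' x) ^ 2 * w x)
      (nhdsWithin 0 (Set.Ioi 0)) (nhds 0) := by
    apply squeeze_zero'
    · exact Filter.Eventually.of_forall fun t =>
        setIntegral_nonneg measurableSet_Ici fun x hx =>
          mul_nonneg (sq_nonneg _) (hwpos x hx)
    · exact hineq
    · have := (hnorm.const_mul 2).add (hB.const_mul 2)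
      simpa using this
  -- part 1 : the boundary term tends to 0
  have hpart1 : Tendsto (fun t => (h (t + 0) - h 0) ^ 2)
      (nhdsWithin 0 (Set.Ioi 0)) (nhds 0) := by
    have hint01 : IntegrableOn h' (uIcc (0:ℝ) 1) volume := by
      rw [uIcc_of_le zero_le_one]
      apply Integrable.mono'
        ((integrableOn_const (C := (1:ℝ)) (s := Icc (0:ℝ) 1) (μ := volume) measure_Icc_lt_top.ne).add
          (hint.mono_set (Icc_subset_Ici_self)))
        hm.aestronglyMeasurable.restrict
      rw [ae_restrict_iff' measurableSet_Icc]
      refine Filter.Eventually.of_forall fun x hx => ?_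
      have hw1x := hw1 x hx.1
      have habs : |h' x| ≤ 1 + h' x ^ 2 * w x := by
        nlinarith [sq_nonneg (|h' x| - 1), sq_abs (h' x), abs_nonneg (h' x), sq_nonneg (h' x)]
      simpa [Real.norm_eq_abs] using habs
    have hcont := intervalIntegral.continuousOn_primitive_interval hint01
    have h0mem : (0:ℝ) ∈ uIcc (0:ℝ) 1 := left_mem_uIcc
    have hcwa := hcont 0 h0mem
    have hmap : Tendsto (fun t : ℝ => t + 0) (nhdsWithin (0:ℝ) (Set.Ioi 0))
        (nhdsWithin (0:ℝ) (uIcc (0:ℝ) 1)) := by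
      apply tendsto_nhdsWithin_of_tendsto_nhds_of_eventually_within
      · have : Tendsto (fun t : ℝ => t + 0) (nhds 0) (nhds (0 + 0)) :=
          tendsto_id.add tendsto_const_nhds
        rw [add_zero] at this
        exact this.mono_left nhdsWithin_le_nhds
      · filter_upwards [Ioo_mem_nhdsGT_of_mem ⟨le_refl (0:ℝ), one_pos⟩] with t ht
        rw [uIcc_of_le zero_le_one]
        exact ⟨by linarith [ht.1], by linarith [ht.2]⟩
    have hto : Tendsto (fun t : ℝ => ∫ s in (0:ℝ)..(t + 0), h' s)
        (nhdsWithin 0 (Set.Ioi 0)) (nhds 0) := by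
      have := hcwa.tendsto.comp hmap
      simpa [intervalIntegral.integral_same, Function.comp_def] using this
    have hdiff : Tendsto (fun t => h (t + 0) - h 0) (nhdsWithin 0 (Set.Ioi 0)) (nhds 0) := by
      apply hto.congr'
      filter_upwards [self_mem_nhdsWithin] with t ht
      have := hrep (t + 0) (by simpa using le_of_lt ht)
      rw [this]; ring
    simpa using hdiff.pow 2
  -- assembly
  have hmain : Tendsto (fun t => (h (t + 0) - h 0) ^ 2
      + ∫ x in Ici (0:ℝ), (h' (t + x) - h' x) ^ 2 * w x)
      (nhdsWithin 0 (Set.Ioi 0)) (nhds 0) := by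
    simpa using hpart1.add hpart2
  have hsqrt := (Real.continuous_sqrt.tendsto 0).comp hmain
  rw [Real.sqrt_zero] at hsqrt
  unfold normW
  exact hsqrt
end
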